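/- arXiv:1507.02743 — 6 statements merged into one kernel-verified Lean document; each statement's English description precedes it below -/
import Mathlib

section
/- Let Â be any minimizer of the empirical risk L̂(·; D) over the set of real symmetric positive semidefinite d×d matrices, for a fixed dataset D = (z_1, …, z_n) whose label vectors satisfy 0 ≤ ⟨y_i, y_j⟩ ≤ L̄ for all i ≠ j. Then ‖Â‖_F ≤ Tr(Â) ≤ (1/λ)·max_{i≠j} g(⟨y_i, y_j⟩)·⟨y_i, y_j⟩² ≤ L̄²/λ, where ‖·‖_F is the Frobenius norm. -/
open MeasureTheory Finset
open scoped ENNReal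

noncomputable section

/-- A labeled data point z = (x, y) ∈ ℝ^d × ℝ^L. -/
abbrev Pt (d L : ℕ) := (Fin d → ℝ) × (Fin L → ℝ)

/-- Inner product ⟨y, y'⟩ of label vectors. -/
def ipY {L : ℕ} (y y' : Fin L → ℝ) : ℝ := ∑ i, y i * y' i

/-- Bilinear form xᵀ A x'. -/
def qForm {d : ℕ} (A : Matrix (Fin d) (Fin d) ℝ) (x x' : Fin d → ℝ) : ℝ :=
  ∑ i, ∑ j, x i * A i j * x' j

/-- Euclidean norm ‖x‖₂. -/
def norm2 {d : ℕ} (x : Fin d → ℝ) : ℝ := Real.sqrt (∑ i, x i ^ 2)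

/-- Frobenius norm ‖A‖_F. -/
def frobNorm {d : ℕ} (A : Matrix (Fin d) (Fin d) ℝ) : ℝ :=
  Real.sqrt (∑ i, ∑ j, (A i j) ^ 2)

/-- Loss ℓ(A; z, z') := g(⟨y, y'⟩)·(⟨y, y'⟩ − xᵀ A x')² + λ·Tr(A). -/
def lossFn {d L : ℕ} (g : ℝ → ℝ) (lam : ℝ) (A : Matrix (Fin d) (Fin d) ℝ)
    (z z' : Pt d L) : ℝ :=
  g (ipY z.2 z'.2) * (ipY z.2 z'.2 - qForm A z.1 z'.1) ^ 2 + lam * A.trace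

/-- Empirical risk L̂(A; D) := (1/(n(n−1))) Σᵢ Σ_{j≠i} ℓ(A; zᵢ, zⱼ). -/
def empRisk {d L : ℕ} (g : ℝ → ℝ) (lam : ℝ) {n : ℕ} (A : Matrix (Fin d) (Fin d) ℝ)
    (D : Fin n → Pt d L) : ℝ :=
  (1 / ((n : ℝ) * ((n : ℝ) - 1))) * ∑ i, ∑ j ∈ univ.erase i, lossFn g lam A (D i) (D j)

/-- Population risk L(A) := E_{z,z' i.i.d. ∼ P}[ℓ(A; z, z')]. -/
def popRisk {d L : ℕ} (g : ℝ → ℝ) (lam : ℝ) (P : Measure (Pt d L))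
    (A : Matrix (Fin d) (Fin d) ℝ) : ℝ :=
  ∫ z, (∫ z', lossFn g lam A z z' ∂P) ∂P

/-- Risk relative to the training set, L̃(A; D) := (1/n) Σₖ E_{z∼P}[ℓ(A; z, zₖ)]. -/
def tilRisk {d L : ℕ} (g : ℝ → ℝ) (lam : ℝ) (P : Measure (Pt d L)) {n : ℕ}
    (A : Matrix (Fin d) (Fin d) ℝ) (D : Fin n → Pt d L) : ℝ :=
  (1 / (n : ℝ)) * ∑ k, ∫ z, lossFn g lam A z (D k) ∂P

/-- Law of a Rademacher random variable: uniform on {−1, +1}. -/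
def radMeasure : Measure ℝ :=
  (2⁻¹ : ℝ≥0∞) • Measure.dirac (-1) + (2⁻¹ : ℝ≥0∞) • Measure.dirac 1


/-!
Comparing the minimizer with `A = 0`: since `g ≥ 0`, every loss term is at least `λ Tr A`,
so `λ Tr Â ≤ L̂(Â) ≤ L̂(0)`, and `L̂(0)` averages the values `g(⟨yᵢ, yⱼ⟩) ⟨yᵢ, yⱼ⟩²`, each
at most their maximum, which in turn is at most `L̄²`. The Frobenius bound holds for every positive semidefinite
matrix: `A i j ^ 2 ≤ A i i * A j j` entrywise, and summing gives `‖A‖_F² ≤ (Tr A)²`.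
-/

theorem Matrix.PosSemidef.sq_apply_le_mul_diag {ι : Type*} {A : Matrix ι ι ℝ}
    (hA : A.PosSemidef) (i j : ι) : A i j ^ 2 ≤ A i i * A j j := by
  have hdet := (hA.submatrix ![i, j]).det_nonneg
  have hsymm : A j i = A i j := hA.isHermitian.apply i j
  simp only [Matrix.det_fin_two, Matrix.submatrix_apply, Matrix.cons_val_zero,
    Matrix.cons_val_one, hsymm] at hdet
  nlinarith

theorem frobNorm_le_trace {d : ℕ} {A : Matrix (Fin d) (Fin d) ℝ} (hA : A.PosSemidef) :
    frobNorm A ≤ A.trace := by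
  have hsum : ∑ i, ∑ j, A i j ^ 2 ≤ A.trace ^ 2 := by
    rw [sq, Matrix.trace, Finset.sum_mul_sum]
    exact Finset.sum_le_sum fun i _ => Finset.sum_le_sum fun j _ => hA.sq_apply_le_mul_diag i j
  calc frobNorm A ≤ Real.sqrt (A.trace ^ 2) := Real.sqrt_le_sqrt hsum
    _ = A.trace := Real.sqrt_sq hA.trace_nonneg

def offDiagAvg {n : ℕ} (F : Fin n → Fin n → ℝ) : ℝ :=
  (1 / ((n : ℝ) * ((n : ℝ) - 1))) * ∑ i, ∑ j ∈ univ.erase i, F i j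

theorem offDiagAvg_const {n : ℕ} (hn : 2 ≤ n) (c : ℝ) :
    offDiagAvg (fun _ _ : Fin n => c) = c := by
  have hn' : (2 : ℝ) ≤ n := by exact_mod_cast hn
  have hn1 : (n : ℝ) - 1 ≠ 0 := by linarith
  have hcard : ∀ i : Fin n, ((univ.erase i).card : ℝ) = n - 1 := fun i => by
    rw [card_erase_of_mem (mem_univ i), card_univ, Fintype.card_fin, Nat.cast_sub (by omega)]
    simp
  simp only [offDiagAvg, sum_const, nsmul_eq_mul, hcard, card_univ, Fintype.card_fin]
  field_simp

theorem offDiagAvg_mono {n : ℕ} {F G : Fin n → Fin n → ℝ} (h : ∀ i j, i ≠ j → F i j ≤ G i j) :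
    offDiagAvg F ≤ offDiagAvg G := by
  unfold offDiagAvg
  gcongr with i _ j hj
  · rcases n with _ | n
    · simp
    · push_cast
      rw [add_sub_cancel_right]
      positivity
  · exact h i j (ne_of_mem_erase hj).symm

theorem empRisk_eq_offDiagAvg {d L : ℕ} (g : ℝ → ℝ) (lam : ℝ) {n : ℕ}
    (A : Matrix (Fin d) (Fin d) ℝ) (D : Fin n → Pt d L) :
    empRisk g lam A D = offDiagAvg fun i j => lossFn g lam A (D i) (D j) := rfl

theorem lam_mul_trace_le_empRisk {d L : ℕ} {g : ℝ → ℝ} (hg : ∀ t, 0 ≤ g t) (lam : ℝ) {n : ℕ}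
    (hn : 2 ≤ n) (A : Matrix (Fin d) (Fin d) ℝ) (D : Fin n → Pt d L) :
    lam * A.trace ≤ empRisk g lam A D := by
  rw [empRisk_eq_offDiagAvg, ← offDiagAvg_const hn (lam * A.trace)]
  refine offDiagAvg_mono fun i j _ => ?_
  unfold lossFn
  have := mul_nonneg (hg (ipY (D i).2 (D j).2))
    (sq_nonneg (ipY (D i).2 (D j).2 - qForm A (D i).1 (D j).1))
  linarith

theorem empRisk_zero_le {d L : ℕ} (g : ℝ → ℝ) (lam : ℝ) {n : ℕ} (hn : 2 ≤ n)
    (D : Fin n → Pt d L) {S : ℝ}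
    (hS : ∀ i j, i ≠ j → g (ipY (D i).2 (D j).2) * ipY (D i).2 (D j).2 ^ 2 ≤ S) :
    empRisk g lam 0 D ≤ S := by
  rw [empRisk_eq_offDiagAvg, ← offDiagAvg_const hn S]
  refine offDiagAvg_mono fun i j hij => ?_
  simpa [lossFn, qForm] using hS i j hij

theorem lam_mul_trace_le_of_empRisk_le {d L : ℕ} {g : ℝ → ℝ} (hg : ∀ t, 0 ≤ g t) {lam : ℝ}
    {n : ℕ} (hn : 2 ≤ n) {D : Fin n → Pt d L} {Ahat : Matrix (Fin d) (Fin d) ℝ}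
    (hmin : ∀ A : Matrix (Fin d) (Fin d) ℝ, A.PosSemidef →
      empRisk g lam Ahat D ≤ empRisk g lam A D) {S : ℝ}
    (hS : ∀ i j, i ≠ j → g (ipY (D i).2 (D j).2) * ipY (D i).2 (D j).2 ^ 2 ≤ S) :
    lam * Ahat.trace ≤ S :=
  calc lam * Ahat.trace ≤ empRisk g lam Ahat D := lam_mul_trace_le_empRisk hg lam hn Ahat D
    _ ≤ empRisk g lam 0 D := hmin 0 .zero
    _ ≤ S := empRisk_zero_le g lam hn D hS

theorem mul_sq_le_sq_of_le_one {a t b : ℝ} (ha : a ≤ 1) (ht₀ : 0 ≤ t) (htb : t ≤ b) :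
    a * t ^ 2 ≤ b ^ 2 :=
  calc a * t ^ 2 ≤ 1 * t ^ 2 := by gcongr
    _ ≤ b ^ 2 := by rw [one_mul]; gcongr

theorem stmt0_general {d L : ℕ} {lam Lbar : ℝ} (hlam : 0 < lam)
    (g : ℝ → ℝ) (hg : ∀ t, 0 ≤ g t ∧ g t ≤ 1)
    {n : ℕ} (hn : 2 ≤ n) (D : Fin n → Pt d L)
    (hD : ∀ i j : Fin n, i ≠ j →
      0 ≤ ipY (D i).2 (D j).2 ∧ ipY (D i).2 (D j).2 ≤ Lbar)
    (Ahat : Matrix (Fin d) (Fin d) ℝ) (hAhat : Ahat.PosSemidef)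
    (hmin : ∀ A : Matrix (Fin d) (Fin d) ℝ, A.PosSemidef →
      empRisk g lam Ahat D ≤ empRisk g lam A D) :
    frobNorm Ahat ≤ Ahat.trace ∧
    Ahat.trace ≤ (1 / lam) * (⨆ p : {p : Fin n × Fin n // p.1 ≠ p.2},
        g (ipY (D p.1.1).2 (D p.1.2).2) * (ipY (D p.1.1).2 (D p.1.2).2) ^ 2) ∧
    (1 / lam) * (⨆ p : {p : Fin n × Fin n // p.1 ≠ p.2},
        g (ipY (D p.1.1).2 (D p.1.2).2) * (ipY (D p.1.1).2 (D p.1.2).2) ^ 2) ≤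
      Lbar ^ 2 / lam := by
  set f : {p : Fin n × Fin n // p.1 ≠ p.2} → ℝ :=
    fun p => g (ipY (D p.1.1).2 (D p.1.2).2) * ipY (D p.1.1).2 (D p.1.2).2 ^ 2
  have hf_le_iSup : ∀ i j (hij : i ≠ j), f ⟨(i, j), hij⟩ ≤ ⨆ p, f p :=
    fun i j hij => le_ciSup (Finite.bddAbove_range f) ⟨(i, j), hij⟩
  have hiSup_le : ⨆ p, f p ≤ Lbar ^ 2 :=
    Real.iSup_le (fun p => mul_sq_le_sq_of_le_one (hg _).2 (hD _ _ p.2).1 (hD _ _ p.2).2)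
      (sq_nonneg Lbar)
  have htrace := lam_mul_trace_le_of_empRisk_le (fun t => (hg t).1) hn hmin hf_le_iSup
  simp only [one_div, inv_mul_eq_div]
  exact ⟨frobNorm_le_trace hAhat, (le_div_iff₀ hlam).2 (by linarith), by gcongr⟩

theorem stmt0 {d L : ℕ} {lam Lbar : ℝ} (hlam : 0 < lam) (hLbar : 0 ≤ Lbar)
    (g : ℝ → ℝ) (hg : ∀ t, 0 ≤ g t ∧ g t ≤ 1)
    {n : ℕ} (hn : 2 ≤ n) (D : Fin n → Pt d L)
    (hD : ∀ i j : Fin n, i ≠ j →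
      0 ≤ ipY (D i).2 (D j).2 ∧ ipY (D i).2 (D j).2 ≤ Lbar)
    (Ahat : Matrix (Fin d) (Fin d) ℝ) (hAhat : Ahat.PosSemidef)
    (hmin : ∀ A : Matrix (Fin d) (Fin d) ℝ, A.PosSemidef →
      empRisk g lam Ahat D ≤ empRisk g lam A D) :
    frobNorm Ahat ≤ Ahat.trace ∧
    Ahat.trace ≤ (1 / lam) * (⨆ p : {p : Fin n × Fin n // p.1 ≠ p.2},
        g (ipY (D p.1.1).2 (D p.1.2).2) * (ipY (D p.1.1).2 (D p.1.2).2) ^ 2) ∧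
    (1 / lam) * (⨆ p : {p : Fin n × Fin n // p.1 ≠ p.2},
        g (ipY (D p.1.1).2 (D p.1.2).2) * (ipY (D p.1.1).2 (D p.1.2).2) ^ 2) ≤
      Lbar ^ 2 / lam :=
  stmt0_general hlam g hg hn D hD Ahat hAhat hmin

end
end

section
/- Let A be a real symmetric positive semidefinite d×d matrix with ‖A‖_F ≤ r. Let D = (z_1, …, z_n) and D^i = (z_1, …, z_{i−1}, z_i', z_{i+1}, …, z_n) be two datasets differing only in the i-th point, where all points z = (x, y) involved satisfy ‖x‖₂ ≤ R and any two of them satisfy 0 ≤ ⟨y, y'⟩ ≤ L̄. Then |L̂(A; D) − L̂(A; D^i)| ≤ 4(L̄² + r² R⁴)/n. -/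
open MeasureTheory Finset
open scoped ENNReal

noncomputable section

/-!
Only the pairs that involve the replaced point change, and there are `2(n - 1)` of them among the
`n(n - 1)` ordered pairs. On each such pair the loss moves by at most `2(L̄² + r²R⁴)`: the trace
term is the same for both datasets, the weight lies in `[0, 1]`, and by Cauchy–Schwarz
`|xᵀAx'| ≤ ‖A‖_F ‖x‖₂ ‖x'‖₂ ≤ rR²`, so `(⟨y, y'⟩ − xᵀAx')² ≤ 2(L̄² + r²R⁴)`.
-/

lemma norm2_sq {d : ℕ} (x : Fin d → ℝ) : norm2 x ^ 2 = ∑ i, x i ^ 2 :=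
  Real.sq_sqrt (sum_nonneg fun _ _ => sq_nonneg _)

lemma frobNorm_sq {d : ℕ} (A : Matrix (Fin d) (Fin d) ℝ) :
    frobNorm A ^ 2 = ∑ i, ∑ j, A i j ^ 2 :=
  Real.sq_sqrt (sum_nonneg fun _ _ => sum_nonneg fun _ _ => sq_nonneg _)

lemma qForm_sq_le {d : ℕ} (A : Matrix (Fin d) (Fin d) ℝ) (x x' : Fin d → ℝ) :
    qForm A x x' ^ 2 ≤ frobNorm A ^ 2 * (norm2 x ^ 2 * norm2 x' ^ 2) := by
  have hq : qForm A x x' = ∑ p : Fin d × Fin d, A p.1 p.2 * (x p.1 * x' p.2) := by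
    rw [qForm, Fintype.sum_prod_type]
    exact sum_congr rfl fun _ _ => sum_congr rfl fun _ _ => by ring
  have hA : frobNorm A ^ 2 = ∑ p : Fin d × Fin d, A p.1 p.2 ^ 2 := by
    rw [frobNorm_sq, Fintype.sum_prod_type]
  have hx : norm2 x ^ 2 * norm2 x' ^ 2 = ∑ p : Fin d × Fin d, (x p.1 * x' p.2) ^ 2 := by
    rw [norm2_sq, norm2_sq, sum_mul_sum, Fintype.sum_prod_type]
    exact sum_congr rfl fun _ _ => sum_congr rfl fun _ _ => by ring
  rw [hq, hA, hx]
  exact sum_mul_sq_le_sq_mul_sq _ _ _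

lemma qForm_sq_le_of_le {d : ℕ} {A : Matrix (Fin d) (Fin d) ℝ} {x x' : Fin d → ℝ} {r R : ℝ}
    (hA : frobNorm A ≤ r) (hx : norm2 x ≤ R) (hx' : norm2 x' ≤ R) :
    qForm A x x' ^ 2 ≤ r ^ 2 * R ^ 4 := by
  have hA0 : 0 ≤ frobNorm A := Real.sqrt_nonneg _
  have hx0 : 0 ≤ norm2 x := Real.sqrt_nonneg _
  have hx0' : 0 ≤ norm2 x' := Real.sqrt_nonneg _
  calc qForm A x x' ^ 2 ≤ frobNorm A ^ 2 * (norm2 x ^ 2 * norm2 x' ^ 2) := qForm_sq_le A x x'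
    _ ≤ r ^ 2 * (R ^ 2 * R ^ 2) := by gcongr
    _ = r ^ 2 * R ^ 4 := by ring

lemma lossFn_mem_Icc {d L : ℕ} {g : ℝ → ℝ} (lam : ℝ) (A : Matrix (Fin d) (Fin d) ℝ)
    {z z' : Pt d L} {Lbar M : ℝ} (hg : 0 ≤ g (ipY z.2 z'.2) ∧ g (ipY z.2 z'.2) ≤ 1)
    (hy : 0 ≤ ipY z.2 z'.2 ∧ ipY z.2 z'.2 ≤ Lbar) (hq : qForm A z.1 z'.1 ^ 2 ≤ M) :
    lossFn g lam A z z' ∈ Set.Icc (lam * A.trace) (lam * A.trace + 2 * (Lbar ^ 2 + M)) := by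
  set a := ipY z.2 z'.2
  set b := qForm A z.1 z'.1
  have hsq : (a - b) ^ 2 ≤ 2 * (Lbar ^ 2 + M) := by
    nlinarith [sq_nonneg (a + b), hy.1, hy.2]
  have hfit : g a * (a - b) ^ 2 ≤ (a - b) ^ 2 := mul_le_of_le_one_left (sq_nonneg _) hg.2
  constructor <;> unfold lossFn <;> linarith [mul_nonneg hg.1 (sq_nonneg (a - b))]

lemma sum_offDiag_eq_row_add_col {ι : Type*} [Fintype ι] [DecidableEq ι] (h : ι → ι → ℝ)
    (i : ι) (hzero : ∀ j k, j ≠ i → k ≠ i → h j k = 0) :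
    ∑ j, ∑ k ∈ univ.erase j, h j k = ∑ k ∈ univ.erase i, h i k + ∑ j ∈ univ.erase i, h j i := by
  rw [← add_sum_erase univ _ (mem_univ i)]
  congr 1
  refine sum_congr rfl fun j hj => ?_
  have hji : j ≠ i := ne_of_mem_erase hj
  refine sum_eq_single_of_mem i (mem_erase.2 ⟨hji.symm, mem_univ i⟩) fun k _ hki => ?_
  exact hzero j k hji hki

lemma abs_sum_offDiag_le {ι : Type*} [Fintype ι] [DecidableEq ι] (h : ι → ι → ℝ) (i : ι)
    {C : ℝ} (hzero : ∀ j k, j ≠ i → k ≠ i → h j k = 0) (hC : ∀ j k, |h j k| ≤ C) :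
    |∑ j, ∑ k ∈ univ.erase j, h j k| ≤ 2 * ((Fintype.card ι : ℝ) - 1) * C := by
  have hcard : ((univ.erase i).card : ℝ) = (Fintype.card ι : ℝ) - 1 := by
    rw [card_erase_of_mem (mem_univ i), card_univ,
      Nat.cast_sub (Fintype.card_pos_iff.2 ⟨i⟩), Nat.cast_one]
  have hline : ∀ f : ι → ℝ, (∀ k, |f k| ≤ C) →
      |∑ k ∈ univ.erase i, f k| ≤ ((Fintype.card ι : ℝ) - 1) * C := fun f hf => by
    rw [← hcard, ← nsmul_eq_mul]
    exact (abs_sum_le_sum_abs _ _).trans (sum_le_card_nsmul _ _ _ fun k _ => hf k)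
  rw [sum_offDiag_eq_row_add_col h i hzero]
  calc _ ≤ |∑ k ∈ univ.erase i, h i k| + |∑ j ∈ univ.erase i, h j i| := abs_add_le _ _
    _ ≤ _ := by linarith [hline _ fun k => hC i k, hline _ fun j => hC j i]

lemma empRisk_sub_empRisk {d L : ℕ} (g : ℝ → ℝ) (lam : ℝ) {n : ℕ}
    (A : Matrix (Fin d) (Fin d) ℝ) (D D' : Fin n → Pt d L) :
    empRisk g lam A D - empRisk g lam A D' = (1 / ((n : ℝ) * ((n : ℝ) - 1))) *
      ∑ j, ∑ k ∈ univ.erase j, (lossFn g lam A (D j) (D k) - lossFn g lam A (D' j) (D' k)) := by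
  simp only [empRisk, ← mul_sub, ← sum_sub_distrib]

theorem stmt2_general {d L : ℕ} {lam r R Lbar : ℝ}
    (g : ℝ → ℝ) (hg : ∀ t, 0 ≤ g t ∧ g t ≤ 1)
    (A : Matrix (Fin d) (Fin d) ℝ) (hAr : frobNorm A ≤ r)
    {n : ℕ} (hn : 2 ≤ n) (i : Fin n) (D D' : Fin n → Pt d L)
    (hdiff : ∀ j : Fin n, j ≠ i → D j = D' j)
    (hx : ∀ z ∈ Set.range D ∪ Set.range D', norm2 z.1 ≤ R)
    (hy : ∀ z ∈ Set.range D ∪ Set.range D', ∀ z' ∈ Set.range D ∪ Set.range D',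
      0 ≤ ipY z.2 z'.2 ∧ ipY z.2 z'.2 ≤ Lbar) :
    |empRisk g lam A D - empRisk g lam A D'| ≤
      4 * (Lbar ^ 2 + r ^ 2 * R ^ 4) / n := by
  set C := 2 * (Lbar ^ 2 + r ^ 2 * R ^ 4)
  have hloss : ∀ z ∈ Set.range D ∪ Set.range D', ∀ z' ∈ Set.range D ∪ Set.range D',
      lossFn g lam A z z' ∈ Set.Icc (lam * A.trace) (lam * A.trace + C) := fun z hz z' hz' =>
    lossFn_mem_Icc lam A (hg _) (hy z hz z' hz') (qForm_sq_le_of_le hAr (hx z hz) (hx z' hz'))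
  have hD : ∀ j, D j ∈ Set.range D ∪ Set.range D' := fun j => Or.inl ⟨j, rfl⟩
  have hD' : ∀ j, D' j ∈ Set.range D ∪ Set.range D' := fun j => Or.inr ⟨j, rfl⟩
  have hterm : ∀ j k, |lossFn g lam A (D j) (D k) - lossFn g lam A (D' j) (D' k)| ≤ C :=
    fun j k => by
      simpa [Real.dist_eq] using
        Real.dist_le_of_mem_Icc (hloss _ (hD j) _ (hD k)) (hloss _ (hD' j) _ (hD' k))
  have hsum := abs_sum_offDiag_le
    (fun j k => lossFn g lam A (D j) (D k) - lossFn g lam A (D' j) (D' k)) i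
    (fun j k hj hk => by simp only [hdiff j hj, hdiff k hk, sub_self]) hterm
  have hn1 : (0 : ℝ) < n - 1 := by
    rw [sub_pos, Nat.one_lt_cast]
    omega
  rw [empRisk_sub_empRisk, abs_mul, abs_of_pos (by positivity)]
  calc _ ≤ 1 / ((n : ℝ) * (n - 1)) * (2 * (n - 1) * C) := by
        gcongr
        simpa using hsum
    _ = 4 * (Lbar ^ 2 + r ^ 2 * R ^ 4) / n := by
        field_simp
        ring

theorem stmt2 {d L : ℕ} {lam r R Lbar : ℝ} (hlam : 0 < lam) (hr : 0 < r) (hR : 0 < R)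
    (hLbar : 0 ≤ Lbar)
    (g : ℝ → ℝ) (hg : ∀ t, 0 ≤ g t ∧ g t ≤ 1)
    (A : Matrix (Fin d) (Fin d) ℝ) (hA : A.PosSemidef) (hAr : frobNorm A ≤ r)
    {n : ℕ} (hn : 2 ≤ n) (i : Fin n) (D D' : Fin n → Pt d L)
    (hdiff : ∀ j : Fin n, j ≠ i → D j = D' j)
    (hx : ∀ z ∈ Set.range D ∪ Set.range D', norm2 z.1 ≤ R)
    (hy : ∀ z ∈ Set.range D ∪ Set.range D', ∀ z' ∈ Set.range D ∪ Set.range D',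
      0 ≤ ipY z.2 z'.2 ∧ ipY z.2 z'.2 ≤ Lbar) :
    |empRisk g lam A D - empRisk g lam A D'| ≤
      4 * (Lbar ^ 2 + r ^ 2 * R ^ 4) / n :=
  stmt2_general g hg A hAr hn i D D' hdiff hx hy

end
end

section
/- (Hoeffding decoupling for U-statistics.) Let 𝒳 be a measurable space, let X_1, …, X_n be i.i.d. 𝒳-valued random variables with n even, let T be a countable index set, and let q_τ : 𝒳 × 𝒳 → ℝ, τ ∈ T, be a family of uniformly bounded measurable functions, each symmetric in its two arguments. Then E[ sup_{τ ∈ T} (2/(n(n−1))) Σ_{1 ≤ i < j ≤ n} q_τ(X_i, X_j) ] ≤ E[ sup_{τ ∈ T} (2/n) Σ_{i=1}^{n/2} q_τ(X_i, X_{n/2 + i}) ]. -/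
open MeasureTheory Finset
open scoped ENNReal

noncomputable section

/-! For a symmetric kernel on `Fin n` with `n = 2 m`, the U-statistic is the average over all
permutations `σ` of the block statistic `(2/n) ∑_{i < m} f (σ i) (σ (m + i))`: for each of the `m`
disjoint pairs `(i, m + i)`, the pair `(σ i, σ (m + i))` is uniformly distributed on ordered pairs
of distinct indices. A supremum of averages is at most the average of the suprema, and permuting
the coordinates of an i.i.d. sample does not change its law, so every permuted block statistic has
the same expected supremum as the unpermuted one. -/

open scoped BigOperators

namespace Equiv.Perm

variable {α M : Type*} [Fintype α] [DecidableEq α] [AddCommMonoid M] [Module ℚ≥0 M]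

lemma expect_apply_pair_eq_of_ne (f : α → α → M) {u v u' v' : α} (huv : u ≠ v)
    (huv' : u' ≠ v') :
    𝔼 σ : Perm α, f (σ u) (σ v) = 𝔼 σ : Perm α, f (σ u') (σ v') := by
  obtain ⟨π, hπu, hπv⟩ :=
    MulAction.is_two_pretransitive_iff.mp (isMultiplyPretransitive α 2) huv' huv
  refine Fintype.expect_equiv (Equiv.mulRight π) _ _ fun σ => ?_
  simp [← hπu, ← hπv]

lemma expect_apply_pair_eq_expect_offDiag (f : α → α → M) {u v : α} (huv : u ≠ v) :
    𝔼 σ : Perm α, f (σ u) (σ v) = 𝔼 p ∈ univ.offDiag, f p.1 p.2 := by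
  have hne : (univ : Finset α).offDiag.Nonempty := ⟨(u, v), by simpa using huv⟩
  calc 𝔼 σ : Perm α, f (σ u) (σ v)
      = 𝔼 p ∈ univ.offDiag, 𝔼 σ : Perm α, f (σ p.1) (σ p.2) := by
        rw [expect_congr rfl fun p hp => expect_apply_pair_eq_of_ne f (mem_offDiag.1 hp).2.2 huv,
          expect_const hne]
    _ = 𝔼 σ : Perm α, 𝔼 p ∈ univ.offDiag, f (σ p.1) (σ p.2) := expect_comm _ _ _
    _ = 𝔼 σ : Perm α, 𝔼 p ∈ univ.offDiag, f p.1 p.2 := by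
        refine expect_congr rfl fun σ _ => ?_
        exact expect_equiv (σ.prodCongr σ) (by simp) fun _ _ => rfl
    _ = 𝔼 p ∈ univ.offDiag, f p.1 p.2 := Fintype.expect_const _

lemma expect_sum_apply_pairs {ι : Type*} [Fintype ι] (f : α → α → M) {a b : ι → α}
    (hab : ∀ i, a i ≠ b i) :
    𝔼 σ : Perm α, ∑ i, f (σ (a i)) (σ (b i)) =
      Fintype.card ι • 𝔼 p ∈ univ.offDiag, f p.1 p.2 := by
  rw [expect_sum_comm,
    Fintype.sum_congr _ _ fun i => expect_apply_pair_eq_expect_offDiag f (hab i), sum_const,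
    card_univ]

end Equiv.Perm

lemma sum_offDiag_eq_two_nsmul_sum_lt {α M : Type*} [Fintype α] [LinearOrder α]
    [AddCommMonoid M] (f : α → α → M) (hf : ∀ u v, f u v = f v u) :
    ∑ p ∈ univ.offDiag, f p.1 p.2 =
      2 • ∑ p ∈ univ.filter (fun p : α × α => p.1 < p.2), f p.1 p.2 := by
  have hsplit : (univ : Finset α).offDiag
      = univ.filter (fun p : α × α => p.1 < p.2) ∪ univ.filter (fun p : α × α => p.2 < p.1) := by
    ext p
    simp [lt_or_lt_iff_ne]
  have hswap : ∑ p ∈ univ.filter (fun p : α × α => p.2 < p.1), f p.1 p.2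
      = ∑ p ∈ univ.filter (fun p : α × α => p.1 < p.2), f p.1 p.2 :=
    sum_equiv (Equiv.prodComm α α) (by simp) fun p _ => hf p.1 p.2
  rw [hsplit, sum_union (disjoint_filter.2 fun p _ h => h.not_gt), hswap, two_nsmul]

lemma expect_offDiag_eq_two_div_mul_sum_lt {α : Type*} [Fintype α] [LinearOrder α]
    (f : α → α → ℝ) (hf : ∀ u v, f u v = f v u) :
    𝔼 p ∈ univ.offDiag, f p.1 p.2 =
      2 / ((Fintype.card α : ℝ) * ((Fintype.card α : ℝ) - 1)) *
        ∑ p ∈ univ.filter (fun p : α × α => p.1 < p.2), f p.1 p.2 := by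
  rw [expect_eq_sum_div_card, sum_offDiag_eq_two_nsmul_sum_lt f hf, offDiag_card, card_univ,
    Nat.cast_sub (Nat.le_mul_self _), nsmul_eq_mul]
  push_cast
  ring

lemma two_div_mul_sum_lt_eq_expect_perm {n m : ℕ} (hn : n = 2 * m) (f : Fin n → Fin n → ℝ)
    (hf : ∀ u v, f u v = f v u) :
    2 / ((n : ℝ) * ((n : ℝ) - 1)) * ∑ p ∈ univ.filter (fun p : Fin n × Fin n => p.1 < p.2),
        f p.1 p.2 =
      𝔼 σ : Equiv.Perm (Fin n), 2 / (n : ℝ) * ∑ i : Fin m,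
            f (σ ⟨i, i.2.trans_le (by omega)⟩)
          (σ ⟨m + i, (Nat.add_lt_add_left i.2 m).trans_le (by omega)⟩) := by
  obtain rfl | hm := Nat.eq_zero_or_pos m
  · subst hn
    simp
  have hU := expect_offDiag_eq_two_div_mul_sum_lt f hf
  rw [Fintype.card_fin] at hU
  rw [← hU, ← mul_expect, Equiv.Perm.expect_sum_apply_pairs f fun i => Fin.ne_of_val_ne ?_,
    Fintype.card_fin, nsmul_eq_mul, ← mul_assoc]
  · have hcoef : 2 / (n : ℝ) * m = 1 := by
      rw [hn, Nat.cast_mul, Nat.cast_two]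
      field_simp
    rw [hcoef, one_mul]
  · simpa using hm.ne'

lemma abs_ciSup_le {T : Type*} [Nonempty T] {g : T → ℝ} {C : ℝ} (h : ∀ τ, |g τ| ≤ C) :
    |⨆ τ, g τ| ≤ C := by
  have hbdd : BddAbove (Set.range g) := ⟨C, Set.forall_mem_range.2 fun τ => (abs_le.1 (h τ)).2⟩
  obtain ⟨τ₀⟩ := ‹Nonempty T›
  exact abs_le.2
    ⟨(abs_le.1 (h τ₀)).1.trans (le_ciSup hbdd τ₀), ciSup_le fun τ => (abs_le.1 (h τ)).2⟩

section Integral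

variable {Ω : Type*} [MeasurableSpace Ω]

lemma integrable_iSup_of_abs_le {μ : Measure Ω} [IsFiniteMeasure μ] {T : Type*} [Countable T]
    [Nonempty T] {g : T → Ω → ℝ} (hg : ∀ τ, Measurable (g τ)) {C : ℝ} (hC : ∀ τ x, |g τ x| ≤ C) :
    Integrable (fun x => ⨆ τ, g τ x) μ :=
  .of_bound (Measurable.iSup hg).aestronglyMeasurable C
    (ae_of_all _ fun x => abs_ciSup_le fun τ => hC τ x)

lemma integral_expect {μ : Measure Ω} {ι : Type*} (s : Finset ι) {f : ι → Ω → ℝ}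
    (hf : ∀ i ∈ s, Integrable (f i) μ) :
    ∫ x, 𝔼 i ∈ s, f i x ∂μ = 𝔼 i ∈ s, ∫ x, f i x ∂μ := by
  simp only [expect_eq_sum_div_card]
  rw [integral_div, integral_finsetSum s hf]

lemma integrable_expect {μ : Measure Ω} {ι : Type*} (s : Finset ι) {f : ι → Ω → ℝ}
    (hf : ∀ i ∈ s, Integrable (f i) μ) : Integrable (fun x => 𝔼 i ∈ s, f i x) μ := by
  simp only [expect_eq_sum_div_card]
  exact (integrable_finsetSum s hf).div_const _

lemma integral_comp_perm {X ι : Type*} [MeasurableSpace X] [Fintype ι] (μ : Measure X)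
    [SigmaFinite μ] (σ : Equiv.Perm ι) (g : (ι → X) → ℝ) :
    ∫ x, g (fun i => x (σ i)) ∂Measure.pi (fun _ => μ) = ∫ x, g x ∂Measure.pi (fun _ => μ) :=
  (measurePreserving_arrowCongr' (fun _ => μ) (fun _ => μ) σ.symm (MeasurableEquiv.refl X)
    fun _ => .id μ).integral_comp' g

end Integral

lemma integral_iSup_expect_perm_le {X ι T : Type*} [MeasurableSpace X] [Fintype ι]
    [DecidableEq ι] (μ : Measure X) [IsFiniteMeasure μ] [Countable T] [Nonempty T]
    (V : T → (ι → X) → ℝ) (hV : ∀ τ, Measurable (V τ)) (C : ℝ) (hVC : ∀ τ x, |V τ x| ≤ C) :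
    ∫ x, (⨆ τ, 𝔼 σ : Equiv.Perm ι, V τ (fun i => x (σ i))) ∂Measure.pi (fun _ => μ) ≤
      ∫ x, (⨆ τ, V τ x) ∂Measure.pi (fun _ => μ) := by
  set ν := Measure.pi fun _ : ι => μ
  have hperm : ∀ σ : Equiv.Perm ι, Measurable fun x : ι → X => fun i => x (σ i) :=
    fun σ => measurable_pi_lambda _ fun i => measurable_pi_apply (σ i)
  have hW : ∀ σ : Equiv.Perm ι, Integrable (fun x => ⨆ τ, V τ (fun i => x (σ i))) ν :=
    fun σ => integrable_iSup_of_abs_le (fun τ => (hV τ).comp (hperm σ)) fun τ x => hVC τ _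
  have hU : Integrable (fun x => ⨆ τ, 𝔼 σ : Equiv.Perm ι, V τ (fun i => x (σ i))) ν := by
    refine integrable_iSup_of_abs_le (C := C) (fun τ => ?_) fun τ x => ?_
    · simp only [expect_eq_sum_div_card]
      exact (Finset.measurable_sum _ fun σ _ => (hV τ).comp (hperm σ)).div_const _
    · calc |𝔼 σ : Equiv.Perm ι, V τ (fun i => x (σ i))|
          ≤ 𝔼 σ : Equiv.Perm ι, |V τ (fun i => x (σ i))| := abs_expect_le _ _
        _ ≤ 𝔼 _σ : Equiv.Perm ι, C := expect_le_expect fun σ _ => hVC τ _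
        _ = C := Fintype.expect_const C
  calc ∫ x, (⨆ τ, 𝔼 σ : Equiv.Perm ι, V τ (fun i => x (σ i))) ∂ν
      ≤ ∫ x, 𝔼 σ : Equiv.Perm ι, ⨆ τ, V τ (fun i => x (σ i)) ∂ν := by
        refine integral_mono hU ?_ fun x => ciSup_le fun τ => expect_le_expect fun σ _ => ?_
        · exact integrable_expect _ fun σ _ => hW σ
        · exact le_ciSup ⟨C, Set.forall_mem_range.2 fun τ' => (abs_le.1 (hVC τ' _)).2⟩ τ
    _ = 𝔼 σ : Equiv.Perm ι, ∫ x, ⨆ τ, V τ (fun i => x (σ i)) ∂ν :=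
        integral_expect _ fun σ _ => hW σ
    _ = ∫ x, (⨆ τ, V τ x) ∂ν := by
        rw [expect_congr rfl fun σ _ => integral_comp_perm μ σ fun x => ⨆ τ, V τ x,
          Fintype.expect_const]

theorem stmt4 {X : Type*} [MeasurableSpace X]
    (mu : Measure X) [IsProbabilityMeasure mu]
    {T : Type*} [Countable T] [Nonempty T]
    (q : T → X → X → ℝ)
    (hqm : ∀ tau : T, Measurable fun p : X × X => q tau p.1 p.2)
    (hsymm : ∀ (tau : T) (x y : X), q tau x y = q tau y x)
    (B : ℝ) (hbound : ∀ (tau : T) (x y : X), |q tau x y| ≤ B)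
    {n m : ℕ} (hn : n = 2 * m) :
    (∫ Xs, (⨆ tau : T, (2 / ((n : ℝ) * ((n : ℝ) - 1))) *
        ∑ p ∈ Finset.univ.filter (fun p : Fin n × Fin n => p.1 < p.2),
          q tau (Xs p.1) (Xs p.2)) ∂(Measure.pi fun _ : Fin n => mu)) ≤
    ∫ Xs, (⨆ tau : T, (2 / (n : ℝ)) * ∑ i : Fin m,
        q tau (Xs ⟨(i : ℕ), by have := i.isLt; omega⟩)
              (Xs ⟨m + (i : ℕ), by have := i.isLt; omega⟩))
      ∂(Measure.pi fun _ : Fin n => mu) := by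
  set V : T → (Fin n → X) → ℝ := fun tau Xs => (2 / (n : ℝ)) * ∑ i : Fin m,
    q tau (Xs ⟨(i : ℕ), by have := i.isLt; omega⟩) (Xs ⟨m + (i : ℕ), by have := i.isLt; omega⟩)
  have hq : ∀ tau (a b : Fin n), Measurable fun Xs : Fin n → X => q tau (Xs a) (Xs b) :=
    fun tau a b => (hqm tau).comp (f := fun Xs : Fin n → X => (Xs a, Xs b)) (by fun_prop)
  have hV : ∀ tau, Measurable (V tau) := fun tau =>
    (Finset.measurable_sum _ fun i _ => hq tau _ _).const_mul _
  have hVB : ∀ tau Xs, |V tau Xs| ≤ 2 / (n : ℝ) * (m * B) := fun tau Xs => by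
    rw [abs_mul, abs_of_nonneg (by positivity)]
    gcongr
    refine (abs_sum_le_sum_abs _ _).trans ?_
    exact (sum_le_sum fun i _ => hbound tau _ _).trans_eq (by simp)
  calc _ = ∫ Xs, (⨆ tau : T, 𝔼 σ : Equiv.Perm (Fin n), V tau (fun j => Xs (σ j)))
        ∂(Measure.pi fun _ : Fin n => mu) := by
        congr with Xs
        congr with tau
        exact two_div_mul_sum_lt_eq_expect_perm hn (fun u v => q tau (Xs u) (Xs v))
          fun u v => hsymm tau _ _
    _ ≤ _ := integral_iSup_expect_perm_le mu V hV _ hVB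

end
end

section
/- (Contraction inequality.) Let 𝒳 be a set, let H be a countable set of uniformly bounded real-valued functions on 𝒳, and let x_1, …, x_n be arbitrary elements of 𝒳. Let φ_i : ℝ → ℝ, i = 1, …, n, be K-Lipschitz functions with φ_i(0) = 0 for all i, and let ε_1, …, ε_n be i.i.d. Rademacher random variables. Then E_ε[ sup_{h ∈ H} (1/n) Σ_{i=1}^n ε_i φ_i(h(x_i)) ] ≤ K·E_ε[ sup_{h ∈ H} (1/n) Σ_{i=1}^n ε_i h(x_i) ]. -/
open MeasureTheory Finset
open scoped ENNReal

noncomputable section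

/-! ### Auxiliary material for the contraction inequality -/

/-- The real sign associated with a boolean. -/
def sgn (b : Bool) : ℝ := if b then 1 else -1

instance : IsProbabilityMeasure radMeasure := by
  constructor
  simp [radMeasure]
  rw [ENNReal.inv_two_add_inv_two]

lemma rad_apply (S : Set ℝ) :
    radMeasure S = 2⁻¹ * S.indicator 1 (-1) + 2⁻¹ * S.indicator 1 1 := by
  simp [radMeasure, Measure.dirac_apply]

lemma pi_rad (n : ℕ) :
    (Measure.pi fun _ : Fin n => radMeasure) =
      ∑ s : Fin n → Bool, ((2 : ℝ≥0∞) ^ n)⁻¹ • Measure.dirac (fun i => sgn (s i)) := by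
  refine Measure.pi_eq fun S hS => ?_
  have : ∀ s : Fin n → Bool,
      (Measure.dirac (fun i => sgn (s i)) : Measure (Fin n → ℝ)) (Set.pi Set.univ S)
        = ∏ i, (S i).indicator 1 (sgn (s i)) := by
    intro s
    rw [Measure.dirac_apply]
    by_cases h : (fun i => sgn (s i)) ∈ Set.pi Set.univ S
    · rw [Set.indicator_of_mem h]
      rw [Set.mem_univ_pi] at h
      exact (Finset.prod_eq_one fun i _ => by simp [Set.indicator_of_mem (h i)]).symm
    · rw [Set.indicator_of_notMem h]
      rw [Set.mem_univ_pi] at h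
      push_neg at h
      obtain ⟨i, hi⟩ := h
      exact (Finset.prod_eq_zero (Finset.mem_univ i) (by simp [Set.indicator_of_notMem hi])).symm
  simp_rw [Measure.finset_sum_apply, Measure.smul_apply, smul_eq_mul, this, rad_apply]
  have hstep : ∀ i : Fin n, (2⁻¹ : ℝ≥0∞) * (S i).indicator 1 (-1) + 2⁻¹ * (S i).indicator 1 1
      = ∑ b : Bool, 2⁻¹ * (S i).indicator 1 (sgn b) := fun i => by
    rw [Fintype.sum_bool]; simp [sgn]; rw [add_comm]
  rw [Finset.prod_congr rfl fun i _ => hstep i, Fintype.prod_sum]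
  refine Finset.sum_congr rfl fun s _ => ?_
  rw [Finset.prod_mul_distrib, Finset.prod_const, Finset.card_univ, Fintype.card_fin,
    ← ENNReal.inv_pow]

lemma integral_pi_rad {n : ℕ} (f : (Fin n → ℝ) → ℝ) :
    ∫ eps, f eps ∂(Measure.pi fun _ : Fin n => radMeasure)
      = ∑ s : Fin n → Bool, ((2 : ℝ) ^ n)⁻¹ * f (fun i => sgn (s i)) := by
  rw [pi_rad]
  have hint : ∀ s : Fin n → Bool,
      Integrable f (((2 : ℝ≥0∞) ^ n)⁻¹ • Measure.dirac fun i => sgn (s i)) := by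
    intro s
    refine Integrable.smul_measure ?_ (by simp)
    have : f =ᵐ[Measure.dirac fun i => sgn (s i)] fun _ => f (fun i => sgn (s i)) := by
      rw [ae_dirac_eq]; exact Filter.eventually_pure.mpr rfl
    exact (integrable_const _).congr this.symm
  rw [integral_finset_sum_measure fun s _ => hint s]
  refine Finset.sum_congr rfl fun s _ => ?_
  rw [integral_smul_measure, integral_dirac]
  simp [ENNReal.toReal_inv, ENNReal.toReal_pow, smul_eq_mul]

lemma twopoint {ι : Type*} [Nonempty ι] (A b : ι → ℝ) (φ : ℝ → ℝ) (K : ℝ)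
    (hlip : ∀ s t, |φ s - φ t| ≤ K * |s - t|)
    (h1 : BddAbove (Set.range fun h => A h + K * b h))
    (h2 : BddAbove (Set.range fun h => A h - K * b h)) :
    (⨆ h, (A h + φ (b h))) + (⨆ h, (A h - φ (b h)))
      ≤ (⨆ h, (A h + K * b h)) + (⨆ h, (A h - K * b h)) := by
  set c := (⨆ h, (A h + K * b h)) + (⨆ h, (A h - K * b h)) with hc
  have key : ∀ h₁ h₂ : ι, (A h₁ + φ (b h₁)) + (A h₂ - φ (b h₂)) ≤ c := by
    intro h₁ h₂
    have habs : (A h₁ + φ (b h₁)) + (A h₂ - φ (b h₂))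
        ≤ A h₁ + A h₂ + K * |b h₁ - b h₂| := by
      have := hlip (b h₁) (b h₂)
      have := le_abs_self (φ (b h₁) - φ (b h₂))
      linarith
    rcases le_total (b h₂) (b h₁) with hb | hb
    · have : A h₁ + A h₂ + K * |b h₁ - b h₂|
          = (A h₁ + K * b h₁) + (A h₂ - K * b h₂) := by
        rw [abs_of_nonneg (by linarith)]; ring
      rw [this] at habs
      exact habs.trans (add_le_add (le_ciSup h1 h₁) (le_ciSup h2 h₂))
    · have : A h₁ + A h₂ + K * |b h₁ - b h₂|
          = (A h₂ + K * b h₂) + (A h₁ - K * b h₁) := by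
        rw [abs_of_nonpos (by linarith)]; ring
      rw [this] at habs
      exact habs.trans (add_le_add (le_ciSup h1 h₂) (le_ciSup h2 h₁))
  have : (⨆ h, (A h + φ (b h))) ≤ c - ⨆ h, (A h - φ (b h)) := by
    refine ciSup_le fun h₁ => ?_
    rw [le_sub_iff_add_le]
    have : (⨆ h, (A h - φ (b h))) ≤ c - (A h₁ + φ (b h₁)) :=
      ciSup_le fun h₂ => by linarith [key h₁ h₂]
    linarith
  linarith

/-- The Rademacher sum functional for a family `ψ` of transformations. -/
def rG {ι : Type*} {n : ℕ} (c : Fin n → ι → ℝ) (ψ : Fin n → ℝ → ℝ) : ℝ :=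
  ∑ s : Fin n → Bool, ⨆ h : ι, ∑ i, sgn (s i) * ψ i (c i h)

lemma rG_step {ι : Type*} [Nonempty ι] {n : ℕ} (c : Fin n → ι → ℝ) (B K : ℝ)
    (hc : ∀ i h, |c i h| ≤ B) (hK : 0 ≤ K)
    (ψ : Fin n → ℝ → ℝ)
    (hψlip : ∀ i s t, |ψ i s - ψ i t| ≤ K * |s - t|)
    (hψ0 : ∀ i, ψ i 0 = 0) (m : Fin n) :
    rG c ψ ≤ rG c (Function.update ψ m fun t => K * t) := by
  classical
  have habs : ∀ (χ : Fin n → ℝ → ℝ), (∀ i s t, |χ i s - χ i t| ≤ K * |s - t|) →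
      (∀ i, χ i 0 = 0) → ∀ i h, |χ i (c i h)| ≤ K * B := by
    intro χ hl h0 i h
    have := hl i (c i h) 0
    rw [h0 i, sub_zero, sub_zero] at this
    exact this.trans (mul_le_mul_of_nonneg_left (hc i h) hK)
  set e := Equiv.funSplitAt m Bool with he
  unfold rG
  rw [← Equiv.sum_comp e.symm, Fintype.sum_prod_type_right,
    ← Equiv.sum_comp e.symm (g := fun s => ⨆ h : ι,
        ∑ i, sgn (s i) * Function.update ψ m (fun t => K * t) i (c i h)),
    Fintype.sum_prod_type_right]
  refine Finset.sum_le_sum fun t _ => ?_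
  rw [Fintype.sum_bool, Fintype.sum_bool]
  set A : ι → ℝ := fun h => ∑ i ∈ univ.erase m, sgn (e.symm (true, t) i) * ψ i (c i h) with hA
  have hsymm : ∀ (b : Bool) (i : Fin n) (hi : i ≠ m), e.symm (b, t) i = t ⟨i, hi⟩ := by
    intro b i hi
    simp [he, Equiv.funSplitAt, Equiv.piSplitAt, hi]
  have hsymm_m : ∀ b : Bool, e.symm (b, t) m = b := by
    intro b; simp [he, Equiv.funSplitAt, Equiv.piSplitAt]
  have hsplit : ∀ (b : Bool) (h : ι),
      ∑ i, sgn (e.symm (b, t) i) * ψ i (c i h) = sgn b * ψ m (c m h) + A h := by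
    intro b h
    rw [← Finset.add_sum_erase _ _ (mem_univ m), hsymm_m]
    congr 1
    exact Finset.sum_congr rfl fun i hi => by
      rw [hsymm b i (Finset.ne_of_mem_erase hi), ← hsymm true i (Finset.ne_of_mem_erase hi)]
  have hsplit' : ∀ (b : Bool) (h : ι),
      ∑ i, sgn (e.symm (b, t) i) * Function.update ψ m (fun t => K * t) i (c i h)
        = sgn b * (K * c m h) + A h := by
    intro b h
    rw [← Finset.add_sum_erase _ _ (mem_univ m), hsymm_m, Function.update_self]
    congr 1
    refine Finset.sum_congr rfl fun i hi => ?_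
    rw [Function.update_of_ne (Finset.ne_of_mem_erase hi),
      hsymm b i (Finset.ne_of_mem_erase hi), ← hsymm true i (Finset.ne_of_mem_erase hi)]
  have hAbound : ∀ h, |A h| ≤ ∑ _i ∈ univ.erase m, K * B := by
    intro h
    refine (Finset.abs_sum_le_sum_abs _ _).trans (Finset.sum_le_sum fun i hi => ?_)
    rw [abs_mul]
    have : |sgn (e.symm (true, t) i)| = 1 := by
      rcases (e.symm (true, t) i) with _ | _ <;> simp [sgn]
    rw [this, one_mul]
    exact habs ψ hψlip hψ0 i h
  have hbb : ∀ (r : ℝ), |r| ≤ 1 → BddAbove (Set.range fun h => A h + r * (K * c m h)) := by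
    intro r hr
    refine ⟨(∑ _i ∈ univ.erase m, K * B) + K * B, ?_⟩
    rintro y ⟨h, rfl⟩
    have h1 := hAbound h
    have h2 : |r * (K * c m h)| ≤ K * B := by
      rw [abs_mul, abs_mul]
      calc |r| * (|K| * |c m h|) ≤ 1 * (K * B) := by
            refine mul_le_mul hr ?_ (by positivity) one_pos.le
            rw [abs_of_nonneg hK]
            exact mul_le_mul_of_nonneg_left (hc m h) hK
        _ = K * B := one_mul _
    have := abs_le.1 h1
    have := abs_le.1 h2
    dsimp only
    linarith
  have hb1 : BddAbove (Set.range fun h => A h + K * c m h) := by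
    have := hbb 1 (by norm_num); simpa using this
  have hb2 : BddAbove (Set.range fun h => A h - K * c m h) := by
    have := hbb (-1) (by norm_num); simpa [sub_eq_add_neg, neg_mul] using this
  have key := twopoint A (fun h => c m h) (ψ m) K (hψlip m) hb1 hb2
  calc (⨆ h : ι, ∑ i, sgn (e.symm (true, t) i) * ψ i (c i h))
        + (⨆ h : ι, ∑ i, sgn (e.symm (false, t) i) * ψ i (c i h))
      = (⨆ h : ι, (A h + ψ m (c m h))) + (⨆ h : ι, (A h - ψ m (c m h))) := by
        congr 1
        · exact iSup_congr fun h => by rw [hsplit]; simp [sgn]; ring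
        · exact iSup_congr fun h => by rw [hsplit]; simp [sgn]; ring
    _ ≤ (⨆ h : ι, (A h + K * c m h)) + (⨆ h : ι, (A h - K * c m h)) := key
    _ = _ := by
        congr 1
        · exact (iSup_congr fun h => by rw [hsplit']; simp [sgn]; ring).symm
        · exact (iSup_congr fun h => by rw [hsplit']; simp [sgn]; ring).symm

lemma rG_contraction {ι : Type*} [Nonempty ι] {n : ℕ} (c : Fin n → ι → ℝ) (B K : ℝ)
    (hc : ∀ i h, |c i h| ≤ B) (hK : 0 ≤ K)
    (φ : Fin n → ℝ → ℝ)
    (hφlip : ∀ i s t, |φ i s - φ i t| ≤ K * |s - t|)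
    (hφ0 : ∀ i, φ i 0 = 0) :
    rG c φ ≤ rG c (fun _ t => K * t) := by
  classical
  have main : ∀ T : Finset (Fin n),
      rG c (fun i => if i ∈ T then φ i else fun t => K * t) ≤ rG c (fun _ t => K * t) := by
    intro T
    induction T using Finset.induction with
    | empty => simp
    | @insert m T hm ih =>
      have hlip' : ∀ i s t, |(if i ∈ insert m T then φ i else fun t => K * t) s
          - (if i ∈ insert m T then φ i else fun t => K * t) t| ≤ K * |s - t| := by
        intro i s t
        by_cases hi : i ∈ insert m T <;> simp only [hi, if_true, if_false]
        · exact hφlip i s t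
        · rw [← mul_sub, abs_mul, abs_of_nonneg hK]
      have h0' : ∀ i, (if i ∈ insert m T then φ i else fun t => K * t) 0 = 0 := by
        intro i
        by_cases hi : i ∈ insert m T <;> simp [hi, hφ0 i]
      have hstep := rG_step c B K hc hK _ hlip' h0' m
      have heq : Function.update (fun i => if i ∈ insert m T then φ i else fun t => K * t) m
          (fun t => K * t) = fun i => if i ∈ T then φ i else fun t => K * t := by
        funext i
        by_cases hi : i = m
        · subst hi
          rw [Function.update_self]
          simp [hm]
        · rw [Function.update_of_ne hi]
          simp [Finset.mem_insert, hi]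
      rw [heq] at hstep
      exact hstep.trans ih
  have := main Finset.univ
  simpa using this


theorem stmt6 {X : Type*} (H : Set (X → ℝ)) (hH : H.Countable)
    (B : ℝ) (hbound : ∀ h ∈ H, ∀ x : X, |h x| ≤ B)
    {n : ℕ} (x : Fin n → X) (K : ℝ)
    (phi : Fin n → ℝ → ℝ)
    (hlip : ∀ (i : Fin n) (s t : ℝ), |phi i s - phi i t| ≤ K * |s - t|)
    (h0 : ∀ i : Fin n, phi i 0 = 0) :
    (∫ eps, (⨆ h : H, (1 / (n : ℝ)) * ∑ i : Fin n, eps i * phi i ((h : X → ℝ) (x i)))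
        ∂(Measure.pi fun _ : Fin n => radMeasure)) ≤
    K * ∫ eps, (⨆ h : H, (1 / (n : ℝ)) * ∑ i : Fin n, eps i * (h : X → ℝ) (x i))
        ∂(Measure.pi fun _ : Fin n => radMeasure) := by
  rcases isEmpty_or_nonempty H with hE | hNE
  · simp [Real.iSup_of_isEmpty]
  rcases Nat.eq_zero_or_pos n with hn | hn
  · subst hn
    simp only [Finset.univ_eq_empty, Finset.sum_empty, mul_zero, ciSup_const,
      integral_zero]
    exact le_rfl
  have hK : 0 ≤ K := by
    have := hlip ⟨0, hn⟩ 1 0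
    simp only [sub_zero, abs_one, mul_one] at this
    exact (abs_nonneg _).trans this
  have hninv : (0 : ℝ) ≤ 1 / (n : ℝ) := by positivity
  have hc2 : (0 : ℝ) ≤ ((2 : ℝ) ^ n)⁻¹ := by positivity
  rw [integral_pi_rad, integral_pi_rad]
  have hcon := rG_contraction (ι := H) (fun i h => (h : X → ℝ) (x i)) B K
    (fun i h => hbound h h.2 (x i)) hK phi hlip h0
  unfold rG at hcon
  calc ∑ s : Fin n → Bool, ((2:ℝ)^n)⁻¹ *
          (⨆ h : H, (1 / (n : ℝ)) * ∑ i, (fun i => sgn (s i)) i * phi i ((h : X → ℝ) (x i)))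
      = ((2:ℝ)^n)⁻¹ * (1 / (n : ℝ)) *
          ∑ s : Fin n → Bool, ⨆ h : H, ∑ i, sgn (s i) * phi i ((h : X → ℝ) (x i)) := by
        rw [Finset.mul_sum]
        refine Finset.sum_congr rfl fun s _ => ?_
        rw [mul_assoc, Real.mul_iSup_of_nonneg hninv]
    _ ≤ ((2:ℝ)^n)⁻¹ * (1 / (n : ℝ)) *
          ∑ s : Fin n → Bool, ⨆ h : H, ∑ i, sgn (s i) * (K * (h : X → ℝ) (x i)) :=
        mul_le_mul_of_nonneg_left hcon (by positivity)
    _ = K * ∑ s : Fin n → Bool, ((2:ℝ)^n)⁻¹ *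
          (⨆ h : H, (1 / (n : ℝ)) * ∑ i, (fun i => sgn (s i)) i * (h : X → ℝ) (x i)) := by
        rw [Finset.mul_sum, Finset.mul_sum]
        refine Finset.sum_congr rfl fun s _ => ?_
        have : ∀ h : H, ∑ i, sgn (s i) * (K * (h : X → ℝ) (x i))
            = K * ∑ i, sgn (s i) * (h : X → ℝ) (x i) := by
          intro h; rw [Finset.mul_sum]; exact Finset.sum_congr rfl fun i _ => by ring
        rw [iSup_congr this, ← Real.mul_iSup_of_nonneg hK, ← Real.mul_iSup_of_nonneg hninv]
        ring
end
end

section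
/- Let P be a probability distribution on ℝ^d × ℝ^L supported on points z = (x, y) with ‖x‖₂ ≤ R. Let n be even, let z_1 = (x_1, y_1), …, z_n = (x_n, y_n) be i.i.d. samples from P, and let ε_1, …, ε_{n/2} be i.i.d. Rademacher variables independent of the data. Then E[ sup_{A ∈ Ã(r)} (2/n) Σ_{i=1}^{n/2} ε_i · g(⟨y_i, y_{n/2+i}⟩) · (x_iᵀ A x_{n/2+i})² ] ≤ 2 r R² · R_{n/2}(Ã(r)), where R_{n/2}(Ã(r)) := E[ sup_{A ∈ Ã(r)} (2/n) Σ_{i=1}^{n/2} ε_i · x_iᵀ A x_{n/2+i} ]. -/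
open MeasureTheory Finset
open scoped ENNReal

noncomputable section

/-!
The Rademacher average is an average over the `2 ^ m` sign vectors, so the claim reduces to an
inequality between finite sums of suprema, which only has to hold for almost every sample. There
all `xᵢ` satisfy `‖xᵢ‖₂ ≤ R`, so by Cauchy–Schwarz every `t = xᵢᵀ A x_{m+i}` with `‖A‖_F ≤ r`
lies in `[-rR², rR²]`, where `t ↦ g t²` is `2rR²`-Lipschitz. The Ledoux–Talagrand contraction
principle, proved by induction on the number of signs, then removes the squares at the cost of
that factor. Both sides are nonnegative (take `A = 0`), so only the right-hand side needs to be
integrable.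
-/

def boolSign (b : Bool) : ℝ := if b then 1 else -1

@[simp] lemma boolSign_true : boolSign true = 1 := rfl

@[simp] lemma boolSign_false : boolSign false = -1 := rfl

@[simp] lemma abs_boolSign (b : Bool) : |boolSign b| = 1 := by
  cases b <;> simp

instance inst_s8 : IsProbabilityMeasure radMeasure :=
  ⟨by simp [radMeasure, ENNReal.inv_two_add_inv_two]⟩

lemma radMeasure_apply {s : Set ℝ} (hs : MeasurableSet s) :
    radMeasure s = 2⁻¹ * ∑ b : Bool, s.indicator 1 (boolSign b) := by
  simp [radMeasure, Measure.dirac_apply' _ hs, mul_add, add_comm]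

lemma pi_radMeasure_eq_sum_dirac (ι : Type*) [Fintype ι] [DecidableEq ι] :
    Measure.pi (fun _ : ι => radMeasure) =
      ∑ s : ι → Bool, ((2 : ℝ≥0∞) ^ Fintype.card ι)⁻¹ • Measure.dirac (boolSign ∘ s) := by
  refine Measure.pi_eq fun t ht => ?_
  have hdirac (s : ι → Bool) :
      Measure.dirac (boolSign ∘ s) (Set.univ.pi t) = ∏ i, (t i).indicator 1 (boolSign (s i)) := by
    rw [Measure.dirac_apply' _ (.univ_pi ht), ← Finset.coe_univ, Set.indicator_pi_one_apply]
    rfl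
  simp only [Measure.finsetSum_apply, Measure.smul_apply, smul_eq_mul, hdirac,
    radMeasure_apply (ht _), Finset.prod_mul_distrib, Fintype.prod_sum, ← Finset.mul_sum,
    Finset.prod_const, Finset.card_univ, ENNReal.inv_pow]

lemma integral_pi_radMeasure {ι : Type*} [Fintype ι] [DecidableEq ι] (f : (ι → ℝ) → ℝ) :
    ∫ ε, f ε ∂Measure.pi (fun _ : ι => radMeasure) =
      ((2 : ℝ) ^ Fintype.card ι)⁻¹ * ∑ s : ι → Bool, f (boolSign ∘ s) := by
  rw [pi_radMeasure_eq_sum_dirac, integral_finsetSum_measure fun s _ => .smul_measure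
    (integrable_dirac enorm_lt_top) (by simp)]
  simp [integral_smul_measure, Finset.mul_sum, ENNReal.toReal_inv]

lemma abs_sum_boolSign_mul_le {κ : Type*} [Fintype κ] (s : κ → Bool) (x : κ → ℝ) :
    |∑ i, boolSign (s i) * x i| ≤ ∑ i, |x i| :=
  (abs_sum_le_sum_abs _ _).trans_eq (by simp)

lemma bddAbove_range_of_abs_le {ι : Type*} {f : ι → ℝ} {C : ℝ} (h : ∀ a, |f a| ≤ C) :
    BddAbove (Set.range f) :=
  ⟨C, Set.forall_mem_range.2 fun a => (le_abs_self _).trans (h a)⟩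

lemma sum_fin_succ_bool {M : Type*} [AddCommMonoid M] {n : ℕ} (G : (Fin (n + 1) → Bool) → M) :
    ∑ s, G s = ∑ t : Fin n → Bool, ∑ b : Bool, G (Fin.cons b t) := by
  rw [← (Fin.consEquiv fun _ => Bool).sum_comp, Fintype.sum_prod_type, Finset.sum_comm]
  rfl

section Contraction

variable {ι : Type*} [Nonempty ι]

lemma sum_bool_iSup_add_boolSign_mul_le {F φ ψ : ι → ℝ} {C : ℝ} (hF : BddAbove (Set.range F))
    (hψ : ∀ a, |ψ a| ≤ C) (hφψ : ∀ a b, |φ a - φ b| ≤ |ψ a - ψ b|) :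
    ∑ b : Bool, ⨆ a, F a + boolSign b * φ a ≤ ∑ b : Bool, ⨆ a, F a + boolSign b * ψ a := by
  have hbdd (b : Bool) : BddAbove (Set.range fun a => F a + boolSign b * ψ a) :=
    hF.range_add (bddAbove_range_of_abs_le fun a => by simpa [abs_mul] using hψ a)
  have hplus (x : ι) : F x + ψ x ≤ ⨆ a, F a + ψ a :=
    le_ciSup (by simpa using hbdd true) x
  have hminus (x : ι) : F x - ψ x ≤ ⨆ a, F a - ψ a :=
    le_ciSup (by simpa [sub_eq_add_neg] using hbdd false) x
  simp only [Fintype.sum_bool, boolSign_true, boolSign_false, one_mul, neg_one_mul,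
    ← sub_eq_add_neg]
  -- the sign of `ψ a - ψ a'` decides which pairing of the two suprema on the right absorbs
  -- `φ a - φ a'`
  have key (a a' : ι) : (F a + φ a) + (F a' - φ a') ≤ (⨆ a, F a + ψ a) + ⨆ a, F a - ψ a := by
    have := hφψ a a'
    rcases abs_cases (ψ a - ψ a') with ⟨h, -⟩ | ⟨h, -⟩
    · linarith [hplus a, hminus a', le_abs_self (φ a - φ a')]
    · linarith [hplus a', hminus a, le_abs_self (φ a - φ a')]
  refine le_sub_iff_add_le.1 (ciSup_le fun a => le_sub_comm.1 (ciSup_le fun a' => ?_))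
  linarith [key a a']

/-- Ledoux–Talagrand contraction, for the Rademacher average written as a sum over sign
vectors. -/
theorem sum_iSup_add_signed_sum_le {C : ℝ} {m : ℕ} {φ ψ : Fin m → ι → ℝ}
    (hφ : ∀ i a, |φ i a| ≤ C) (hψ : ∀ i a, |ψ i a| ≤ C)
    (hφψ : ∀ i a b, |φ i a - φ i b| ≤ |ψ i a - ψ i b|) {F : ι → ℝ}
    (hF : BddAbove (Set.range F)) :
    ∑ s : Fin m → Bool, ⨆ a, F a + ∑ i, boolSign (s i) * φ i a ≤
      ∑ s : Fin m → Bool, ⨆ a, F a + ∑ i, boolSign (s i) * ψ i a := by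
  induction m generalizing F with
  | zero => rfl
  | succ n ih =>
    have hsplit (χ : Fin (n + 1) → ι → ℝ) :
        ∑ s : Fin (n + 1) → Bool, ⨆ a, F a + ∑ i, boolSign (s i) * χ i a =
          ∑ t : Fin n → Bool, ∑ b : Bool,
            ⨆ a, (F a + ∑ i, boolSign (t i) * χ i.succ a) + boolSign b * χ 0 a := by
      simp only [sum_fin_succ_bool, Fin.sum_univ_succ, Fin.cons_zero, Fin.cons_succ]
      simp only [add_comm, add_left_comm]
    have hbdd (t : Fin n → Bool) :
        BddAbove (Set.range fun a => F a + ∑ i, boolSign (t i) * φ i.succ a) :=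
      hF.range_add (bddAbove_range_of_abs_le fun a =>
        (abs_sum_boolSign_mul_le t _).trans (Finset.sum_le_sum fun i _ => hφ i.succ a))
    calc _ = ∑ t : Fin n → Bool, ∑ b : Bool,
            ⨆ a, (F a + ∑ i, boolSign (t i) * φ i.succ a) + boolSign b * φ 0 a := hsplit φ
      _ ≤ ∑ t : Fin n → Bool, ∑ b : Bool,
            ⨆ a, (F a + ∑ i, boolSign (t i) * φ i.succ a) + boolSign b * ψ 0 a :=
          Finset.sum_le_sum fun t _ =>
            sum_bool_iSup_add_boolSign_mul_le (hbdd t) (hψ 0) (hφψ 0)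
      _ = ∑ b : Bool, ∑ t : Fin n → Bool,
            ⨆ a, (F a + boolSign b * ψ 0 a) + ∑ i, boolSign (t i) * φ i.succ a := by
          rw [Finset.sum_comm]
          simp only [add_right_comm]
      _ ≤ ∑ b : Bool, ∑ t : Fin n → Bool,
            ⨆ a, (F a + boolSign b * ψ 0 a) + ∑ i, boolSign (t i) * ψ i.succ a :=
          Finset.sum_le_sum fun b _ => ih (fun i => hφ i.succ) (fun i => hψ i.succ)
            (fun i => hφψ i.succ) (hF.range_add (bddAbove_range_of_abs_le fun a => by
              simpa [abs_mul] using hψ 0 a))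
      _ = _ := by
          rw [hsplit ψ, Finset.sum_comm]
          simp only [add_right_comm]

end Contraction

lemma abs_sq_sub_sq_le {u v B : ℝ} (hu : |u| ≤ B) (hv : |v| ≤ B) :
    |u ^ 2 - v ^ 2| ≤ 2 * B * |u - v| := by
  rw [sq_sub_sq, abs_mul]
  gcongr
  linarith [abs_add_le u v]

theorem sum_iSup_weighted_sq_le {ι : Type*} [Nonempty ι] {m : ℕ} {c B : ℝ} (hc : 0 ≤ c)
    (hB : 0 ≤ B) {w : Fin m → ℝ} (hw : ∀ i, |w i| ≤ 1) {q : Fin m → ι → ℝ}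
    (hq : ∀ i a, |q i a| ≤ B) :
    ∑ s : Fin m → Bool, ⨆ a, c * ∑ i, boolSign (s i) * w i * q i a ^ 2 ≤
      2 * B * ∑ s : Fin m → Bool, ⨆ a, c * ∑ i, boolSign (s i) * q i a := by
  have hφ (i : Fin m) (a : ι) : |c * (w i * q i a ^ 2)| ≤ 2 * B * c * B := by
    rw [abs_mul, abs_mul, abs_of_nonneg hc, abs_pow]
    calc c * (|w i| * |q i a| ^ 2) ≤ c * (1 * B ^ 2) := by gcongr; exacts [hw i, hq i a]
      _ ≤ 2 * B * c * B := by nlinarith [mul_nonneg hc (sq_nonneg B)]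
  have hψ (i : Fin m) (a : ι) : |2 * B * c * q i a| ≤ 2 * B * c * B := by
    rw [abs_mul, abs_of_nonneg (by positivity)]
    exact mul_le_mul_of_nonneg_left (hq i a) (by positivity)
  have hφψ (i : Fin m) (a b : ι) :
      |c * (w i * q i a ^ 2) - c * (w i * q i b ^ 2)| ≤
        |2 * B * c * q i a - 2 * B * c * q i b| := by
    rw [← mul_sub, ← mul_sub, ← mul_sub, abs_mul, abs_mul, abs_mul, abs_of_nonneg hc,
      abs_of_nonneg (by positivity : 0 ≤ 2 * B * c)]
    calc c * (|w i| * |q i a ^ 2 - q i b ^ 2|) ≤ c * (1 * (2 * B * |q i a - q i b|)) := by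
          gcongr
          exacts [hw i, abs_sq_sub_sq_le (hq i a) (hq i b)]
      _ = 2 * B * c * |q i a - q i b| := by ring
  have := sum_iSup_add_signed_sum_le hφ hψ hφψ (F := fun _ => 0) (by simp)
  simp only [zero_add, Finset.mul_sum, Real.mul_iSup_of_nonneg (by positivity : 0 ≤ 2 * B)]
    at this ⊢
  convert this using 4 <;> exact Finset.sum_congr rfl fun _ _ => by ring

lemma abs_qForm_le {d : ℕ} (A : Matrix (Fin d) (Fin d) ℝ) (x x' : Fin d → ℝ) :
    |qForm A x x'| ≤ frobNorm A * (norm2 x * norm2 x') := by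
  have hq : qForm A x x' = ∑ p : Fin d × Fin d, A p.1 p.2 * (x p.1 * x' p.2) := by
    simp only [qForm, Fintype.sum_prod_type]
    exact Finset.sum_congr rfl fun i _ => Finset.sum_congr rfl fun j _ => by ring
  have hA : frobNorm A = √(∑ p : Fin d × Fin d, A p.1 p.2 ^ 2) := by
    rw [frobNorm, Fintype.sum_prod_type]
  have hx : norm2 x * norm2 x' = √(∑ p : Fin d × Fin d, (x p.1 * x' p.2) ^ 2) := by
    simp only [norm2, ← Real.sqrt_mul (Finset.sum_nonneg fun i _ => sq_nonneg (x i)),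
      Finset.sum_mul_sum, Fintype.sum_prod_type, mul_pow]
  rw [hq, hA, hx, ← Real.sqrt_mul (Finset.sum_nonneg fun p _ => sq_nonneg _)]
  exact Real.abs_le_sqrt (Finset.sum_mul_sq_le_sq_mul_sq _ _ _)

lemma abs_qForm_le_of_frobNorm_le {d : ℕ} {A : Matrix (Fin d) (Fin d) ℝ} {x x' : Fin d → ℝ}
    {r R : ℝ} (hA : frobNorm A ≤ r) (hx : norm2 x ≤ R) (hx' : norm2 x' ≤ R) :
    |qForm A x x'| ≤ r * R ^ 2 := by
  have hx₀ : 0 ≤ norm2 x := Real.sqrt_nonneg _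
  have hx'₀ : 0 ≤ norm2 x' := Real.sqrt_nonneg _
  calc |qForm A x x'| ≤ frobNorm A * (norm2 x * norm2 x') := abs_qForm_le A x x'
    _ ≤ r * R ^ 2 := by
      rw [sq]
      gcongr
      exacts [(Real.sqrt_nonneg _).trans hA, hx₀.trans hx]

lemma continuous_qForm {d : ℕ} (x x' : Fin d → ℝ) :
    Continuous fun A : Matrix (Fin d) (Fin d) ℝ => qForm A x x' := by
  unfold qForm; fun_prop

lemma measurable_qForm {d : ℕ} {α : Type*} [MeasurableSpace α] (A : Matrix (Fin d) (Fin d) ℝ)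
    {f f' : α → Fin d → ℝ} (hf : Measurable f) (hf' : Measurable f') :
    Measurable fun z => qForm A (f z) (f' z) := by
  unfold qForm; fun_prop

instance {m n R : Type*} [Countable m] [Countable n] [TopologicalSpace R]
    [SecondCountableTopology R] : SecondCountableTopology (Matrix m n R) :=
  inferInstanceAs (SecondCountableTopology (m → n → R))

lemma measurable_iSup_of_continuous {α ι : Type*} [MeasurableSpace α] [TopologicalSpace ι]
    [TopologicalSpace.SeparableSpace ι] {T : ι → α → ℝ} (hcont : ∀ z, Continuous fun a => T a z)
    (hmeas : ∀ a, Measurable (T a)) :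
    Measurable fun z => ⨆ a, T a z := by
  obtain ⟨D, hD, hdense⟩ := TopologicalSpace.exists_countable_dense ι
  have : Countable D := hD.to_subtype
  simp_rw [← hdense.ciSup' (hcont _)]
  exact .iSup fun a => hmeas a

lemma abs_ciSup_le_s8 {ι : Type*} [Nonempty ι] {f : ι → ℝ} {C : ℝ} (h : ∀ a, |f a| ≤ C) :
    |⨆ a, f a| ≤ C := by
  obtain ⟨a⟩ := ‹Nonempty ι›
  refine abs_le.2 ⟨(abs_le.1 (h a)).1.trans (le_ciSup (bddAbove_range_of_abs_le h) a), ?_⟩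
  exact ciSup_le fun a => (abs_le.1 (h a)).2

section Sample

variable {d L m : ℕ} {κ : Type*} [Fintype κ] {𝒜 : Set (Matrix (Fin d) (Fin d) ℝ)} {r R : ℝ}
  {P : Measure (Pt d L)} [IsProbabilityMeasure P]

lemma ae_abs_qForm_le (h𝒜 : ∀ A ∈ 𝒜, frobNorm A ≤ r) (hP : ∀ᵐ z ∂P, norm2 z.1 ≤ R) :
    ∀ᵐ z ∂Measure.pi (fun _ : κ => P), ∀ k k', ∀ A ∈ 𝒜,
      |qForm A (z k).1 (z k').1| ≤ r * R ^ 2 := by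
  have : ∀ᵐ z ∂Measure.pi (fun _ : κ => P), ∀ k, norm2 (z k).1 ≤ R := ae_all_iff.2 fun k =>
    (Measure.tendsto_eval_ae_ae (μ := fun _ : κ => P) (i := k)).eventually hP
  filter_upwards [this] with z hz k k' A hA
  exact abs_qForm_le_of_frobNorm_le (h𝒜 A hA) (hz k) (hz k')

lemma integrable_iSup_signed_sum_qForm (h0 : 0 ∈ 𝒜) (h𝒜 : ∀ A ∈ 𝒜, frobNorm A ≤ r)
    (hP : ∀ᵐ z ∂P, norm2 z.1 ≤ R) (c : ℝ) (ε : Fin m → ℝ) (u v : Fin m → κ) :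
    Integrable (fun z => ⨆ A : 𝒜, c * ∑ i, ε i * qForm A (z (u i)).1 (z (v i)).1)
      (Measure.pi fun _ : κ => P) := by
  have : Nonempty 𝒜 := ⟨⟨0, h0⟩⟩
  have hmeas : Measurable fun z : κ → Pt d L =>
      ⨆ A : 𝒜, c * ∑ i, ε i * qForm A (z (u i)).1 (z (v i)).1 := by
    refine measurable_iSup_of_continuous (fun z => ?_) (fun A => ?_)
    · exact continuous_const.mul <| continuous_finsetSum _ fun i _ =>
        continuous_const.mul <| (continuous_qForm _ _).comp continuous_subtype_val
    · have (k k' : κ) : Measurable fun z : κ → Pt d L => qForm A (z k).1 (z k').1 :=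
        measurable_qForm _ (measurable_pi_apply k).fst (measurable_pi_apply k').fst
      fun_prop
  refine .of_bound hmeas.aestronglyMeasurable (|c| * ∑ i, |ε i| * (r * R ^ 2)) ?_
  filter_upwards [ae_abs_qForm_le h𝒜 hP] with z hz
  refine (Real.norm_eq_abs _).trans_le (abs_ciSup_le_s8 fun A => ?_)
  rw [abs_mul]
  gcongr
  refine (Finset.abs_sum_le_sum_abs _ _).trans (Finset.sum_le_sum fun i _ => ?_)
  rw [abs_mul]
  gcongr
  exact hz _ _ A A.2

theorem integral_iSup_weighted_sq_qForm_le (h0 : 0 ∈ 𝒜) (h𝒜 : ∀ A ∈ 𝒜, frobNorm A ≤ r)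
    (hP : ∀ᵐ z ∂P, norm2 z.1 ≤ R) {c : ℝ} (hc : 0 ≤ c) {g : ℝ → ℝ} (hg : ∀ t, |g t| ≤ 1)
    (u v : Fin m → κ) :
    ∫ z, (∫ ε, (⨆ A : 𝒜, c * ∑ i, ε i * g (ipY (z (u i)).2 (z (v i)).2) *
          qForm A (z (u i)).1 (z (v i)).1 ^ 2)
        ∂Measure.pi fun _ : Fin m => radMeasure) ∂(Measure.pi fun _ : κ => P) ≤
      2 * r * R ^ 2 * ∫ z, (∫ ε, (⨆ A : 𝒜, c * ∑ i, ε i * qForm A (z (u i)).1 (z (v i)).1)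
        ∂Measure.pi fun _ : Fin m => radMeasure) ∂(Measure.pi fun _ : κ => P) := by
  have : Nonempty 𝒜 := ⟨⟨0, h0⟩⟩
  have hr : 0 ≤ r := (Real.sqrt_nonneg _).trans (h𝒜 0 h0)
  simp only [integral_pi_radMeasure, Fintype.card_fin, Function.comp_apply]
  rw [← integral_const_mul]
  refine integral_mono_of_nonneg (.of_forall fun z => ?_) (.const_mul (.const_mul
    (integrable_finsetSum _ fun s _ =>
      integrable_iSup_signed_sum_qForm h0 h𝒜 hP c _ u v) _) _) ?_
  · refine mul_nonneg (by positivity) (Finset.sum_nonneg fun s _ => Real.iSup_nonneg' ?_)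
    exact ⟨⟨0, h0⟩, by simp [qForm]⟩
  filter_upwards [ae_abs_qForm_le h𝒜 hP] with z hz
  rw [mul_left_comm, mul_assoc 2 r]
  gcongr
  exact sum_iSup_weighted_sq_le hc (by positivity) (fun i => hg _) fun i A => hz _ _ A A.2

end Sample

theorem stmt8 {d L : ℕ} {r R : ℝ} (hr : 0 < r)
    (g : ℝ → ℝ) (hg : ∀ t, 0 ≤ g t ∧ g t ≤ 1)
    (P : Measure (Pt d L)) [IsProbabilityMeasure P]
    (S : Set (Pt d L)) (hSm : MeasurableSet S) (hS1 : P S = 1)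
    (hSx : ∀ z ∈ S, norm2 z.1 ≤ R)
    (m : ℕ) :
    (∫ z, (∫ eps, (⨆ A : {A : Matrix (Fin d) (Fin d) ℝ // A.PosSemidef ∧ frobNorm A ≤ r},
        (2 / ((2 * m : ℕ) : ℝ)) * ∑ i : Fin m,
          eps i * g (ipY (z (⟨(i : ℕ), by have := i.isLt; omega⟩ : Fin (2 * m))).2
                         (z (⟨m + (i : ℕ), by have := i.isLt; omega⟩ : Fin (2 * m))).2) *
            (qForm A.1 (z (⟨(i : ℕ), by have := i.isLt; omega⟩ : Fin (2 * m))).1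
                       (z (⟨m + (i : ℕ), by have := i.isLt; omega⟩ : Fin (2 * m))).1) ^ 2)
        ∂(Measure.pi fun _ : Fin m => radMeasure))
      ∂(Measure.pi fun _ : Fin (2 * m) => P)) ≤
    2 * r * R ^ 2 *
      ∫ z, (∫ eps, (⨆ A : {A : Matrix (Fin d) (Fin d) ℝ // A.PosSemidef ∧ frobNorm A ≤ r},
        (2 / ((2 * m : ℕ) : ℝ)) * ∑ i : Fin m,
          eps i * qForm A.1 (z (⟨(i : ℕ), by have := i.isLt; omega⟩ : Fin (2 * m))).1
                           (z (⟨m + (i : ℕ), by have := i.isLt; omega⟩ : Fin (2 * m))).1)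
        ∂(Measure.pi fun _ : Fin m => radMeasure))
      ∂(Measure.pi fun _ : Fin (2 * m) => P) := by
  have hP : ∀ᵐ z ∂P, norm2 z.1 ≤ R :=
    ((ae_mem_iff_measure_eq hSm.nullMeasurableSet).2 (by simp [hS1])).mono hSx
  exact integral_iSup_weighted_sq_qForm_le (𝒜 := {A | A.PosSemidef ∧ frobNorm A ≤ r})
    ⟨.zero, by simpa [frobNorm] using hr.le⟩ (fun A hA => hA.2) hP (by positivity)
    (fun t => abs_le.2 ⟨by linarith [hg t], (hg t).2⟩) _ _

end
end

section
/- Let P be a probability distribution on ℝ^d × ℝ^L supported on points z = (x, y) with ‖x‖₂ ≤ R, and such that 0 ≤ ⟨y, y'⟩ ≤ L̄ for any two points in the support. There exists a universal constant C > 0 such that for every even n ≥ 2 and every δ ∈ (0,1), with probability at least 1 − δ over i.i.d. samples D = (z_1, …, z_n) from P, sup_{A ∈ Ã(r)} ( L̃(A; D) − L(A) ) ≤ C · (r R² + L̄)² · √((1 + log(1/δ))/n), where L̃(A; D) := (1/n) Σ_{k=1}^n E_{z ∼ P}[ℓ(A; z, z_k)] and L(A) := E_{z, z' i.i.d. ∼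 P}[ℓ(A; z, z')]. -/
open MeasureTheory Finset
open scoped ENNReal

noncomputable section

/-!
For a symmetric matrix `A` the loss is symmetric in `z, z'`, so with
`h_A z' := E_z ℓ(A; z, z')` one has `L(A) = E h_A` and `L̃(A; D) = (1/n) Σ_k h_A z_k`.
Writing `xᵀ A x' = ⟪vec A, x ⊗ x'⟫` makes `ℓ(A; z, z')` affine in three features of the
pair, `g t · t²`, `g t · t · (x ⊗ x')` and `g t · (x ⊗ x') ⊗ (x ⊗ x')` (with `t = ⟨y, y'⟩`),
whose coefficients `1`, `-2 vec A` and `vec A ⊗ vec A` do not depend on the data. Hence,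
uniformly over `‖A‖_F ≤ r`, `n (L̃ - L) ≤ ‖Δ₀‖ + 2r ‖Δ₁‖ + r² ‖Δ₂‖`, where the `Δᵢ` are the
centered sample sums of the `P`-averaged features: sums of i.i.d. Hilbert-space vectors
bounded by `L̄²`, `L̄R²` and `R⁴`.

A centered sum of `n` i.i.d. vectors bounded by `B` has `E ‖Σ‖ ≤ 2B √n` by the second-moment
computation, and `‖Σ‖` has bounded differences `2B`, so McDiarmid's inequality (proved from
Hoeffding's lemma by induction on `n`) bounds its deviation by `2B √(2 n log (1/δ))`. A union
bound over the three features at level `δ/3` gives the claim with `C = 6`.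
-/

open ProbabilityTheory
open scoped NNReal RealInnerProductSpace

section Product

variable {Ω : Type*} [MeasurableSpace Ω]

theorem measurable_fin_cons {n : ℕ} :
    Measurable fun p : Ω × (Fin n → Ω) => (Fin.cons p.1 p.2 : Fin (n + 1) → Ω) := by
  convert (MeasurableEquiv.piFinSuccAbove (fun _ : Fin (n + 1) => Ω) 0).symm.measurable using 1
  ext p : 1
  simp [Fin.insertNthEquiv]

variable (μ : Measure Ω) [SigmaFinite μ]

theorem measurePreserving_fin_cons {n : ℕ} :
    MeasurePreserving (fun p : Ω × (Fin n → Ω) => (Fin.cons p.1 p.2 : Fin (n + 1) → Ω))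
      (μ.prod (Measure.pi fun _ => μ)) (Measure.pi fun _ => μ) := by
  convert (measurePreserving_piFinSuccAbove (fun _ : Fin (n + 1) => μ) 0).symm using 1
  ext p : 1
  simp [Fin.insertNthEquiv]

theorem integral_pi_fin_succ {E : Type*} [NormedAddCommGroup E] [NormedSpace ℝ E] {n : ℕ}
    {G : (Fin (n + 1) → Ω) → E} (hG : Integrable G (Measure.pi fun _ => μ)) :
    ∫ D, G D ∂(Measure.pi fun _ => μ) =
      ∫ D, ∫ z, G (Fin.cons z D) ∂μ ∂(Measure.pi fun _ => μ) := by
  have h := measurePreserving_fin_cons μ (n := n)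
  have hG' : AEStronglyMeasurable G ((μ.prod (Measure.pi fun _ : Fin n => μ)).map
      fun p => (Fin.cons p.1 p.2 : Fin (n + 1) → Ω)) := by
    rw [h.map_eq]
    exact hG.aestronglyMeasurable
  rw [← h.map_eq, integral_map measurable_fin_cons.aemeasurable hG']
  exact integral_prod_symm _ (h.integrable_comp hG.aestronglyMeasurable |>.mpr hG)

end Product

section BoundedDifferences

variable {Ω : Type*} [MeasurableSpace Ω] {μ : Measure Ω} [IsProbabilityMeasure μ]

theorem abs_integral_sub_integral_le {F₁ F₂ : Ω → ℝ} {c : ℝ} (hF₁ : Integrable F₁ μ)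
    (hF₂ : Integrable F₂ μ) (h : ∀ z, |F₁ z - F₂ z| ≤ c) :
    |∫ z, F₁ z ∂μ - ∫ z, F₂ z ∂μ| ≤ c := by
  rw [← integral_sub hF₁ hF₂]
  simpa using norm_integral_le_of_norm_le_const (μ := μ)
    (ae_of_all _ fun z => (Real.norm_eq_abs _).trans_le (h z))

theorem integrable_comp_fin_cons {n : ℕ} {f : (Fin (n + 1) → Ω) → ℝ} {K : ℝ}
    (hf : Measurable f) (hK : ∀ D, |f D| ≤ K) (D : Fin n → Ω) :
    Integrable (fun z => f (Fin.cons z D)) μ :=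
  .of_bound ((hf.comp measurable_fin_cons).comp measurable_prodMk_right).aestronglyMeasurable K
    (ae_of_all _ fun _ => (Real.norm_eq_abs _).trans_le (hK _))

variable (μ) in
def integralFinCons {n : ℕ} (f : (Fin (n + 1) → Ω) → ℝ) (D : Fin n → Ω) : ℝ :=
  ∫ z, f (Fin.cons z D) ∂μ

section FinCons

variable {n : ℕ} {f : (Fin (n + 1) → Ω) → ℝ} {K : ℝ} {c : ℝ≥0}

theorem measurable_integralFinCons (hf : Measurable f) : Measurable (integralFinCons μ f) :=
  (hf.comp measurable_fin_cons).stronglyMeasurable.integral_prod_left'.measurable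

theorem abs_integralFinCons_le (hK : ∀ D, |f D| ≤ K) (D : Fin n → Ω) :
    |integralFinCons μ f D| ≤ K := by
  simpa [integralFinCons] using norm_integral_le_of_norm_le_const (μ := μ)
    (ae_of_all _ fun z => (Real.norm_eq_abs _).trans_le (hK (Fin.cons z D)))

theorem abs_integralFinCons_update_sub_le (hf : Measurable f) (hK : ∀ D, |f D| ≤ K)
    (hc : ∀ D i z, |f (Function.update D i z) - f D| ≤ c) (D : Fin n → Ω) (i : Fin n)
    (z : Ω) : |integralFinCons μ f (Function.update D i z) - integralFinCons μ f D| ≤ c :=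
  abs_integral_sub_integral_le (integrable_comp_fin_cons hf hK _)
    (integrable_comp_fin_cons hf hK D) fun w => by
      simpa [Fin.cons_update] using hc (Fin.cons w D) i.succ z

theorem integral_integralFinCons (hf : Measurable f) (hK : ∀ D, |f D| ≤ K) :
    ∫ D, integralFinCons μ f D ∂(Measure.pi fun _ => μ) = ∫ D, f D ∂(Measure.pi fun _ => μ) :=
  (integral_pi_fin_succ μ (.of_bound hf.aestronglyMeasurable K
    (ae_of_all _ fun D => (Real.norm_eq_abs _).trans_le (hK D)))).symm

theorem hasSubgaussianMGF_comp_fin_cons_sub_integralFinCons (hf : Measurable f)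
    (hK : ∀ D, |f D| ≤ K) (hc : ∀ D z, |f (Function.update D 0 z) - f D| ≤ c)
    (D : Fin n → Ω) :
    HasSubgaussianMGF (fun z => f (Fin.cons z D) - integralFinCons μ f D) (c ^ 2) μ := by
  have hint := integrable_comp_fin_cons (μ := μ) hf hK D
  have hdev (z : Ω) : |f (Fin.cons z D) - integralFinCons μ f D| ≤ c := by
    simpa [integralFinCons] using abs_integral_sub_integral_le (integrable_const _) hint fun w => by
      simpa [Fin.update_cons_zero, abs_sub_comm] using hc (Fin.cons z D) w
  have hmean : ∫ z, (f (Fin.cons z D) - integralFinCons μ f D) ∂μ = 0 := by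
    simp [integral_sub hint (integrable_const _), integralFinCons]
  have hm : Measurable fun z => f (Fin.cons z D) - integralFinCons μ f D :=
    ((hf.comp measurable_fin_cons).comp measurable_prodMk_right).sub measurable_const
  convert hasSubgaussianMGF_of_mem_Icc_of_integral_eq_zero (a := -c) (b := c)
    hm.aemeasurable (ae_of_all _ fun z => abs_le.mp (hdev z)) hmean using 2
  apply NNReal.eq
  simp [← two_mul]

-- One step of the Doob martingale: Hoeffding's lemma in the first coordinate, conditionally
-- on the others.
theorem mgf_sub_integral_le_mgf_integralFinCons (hf : Measurable f) (hK : ∀ D, |f D| ≤ K)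
    (hc : ∀ D z, |f (Function.update D 0 z) - f D| ≤ c) (t : ℝ) :
    mgf (fun D => f D - ∫ D', f D' ∂(Measure.pi fun _ => μ)) (Measure.pi fun _ => μ) t ≤
      mgf (fun D => integralFinCons μ f D -
          ∫ D', integralFinCons μ f D' ∂(Measure.pi fun _ => μ)) (Measure.pi fun _ => μ) t *
        Real.exp (c ^ 2 * t ^ 2 / 2) := by
  set π := Measure.pi fun _ : Fin n => μ
  set g := integralFinCons μ f
  have hexp_f := (hasSubgaussianMGF_of_mem_Icc (μ := Measure.pi fun _ => μ) (a := -K) (b := K)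
    hf.aemeasurable (ae_of_all _ fun D => abs_le.mp (hK D))).integrable_exp_mul t
  have hexp_g := (hasSubgaussianMGF_of_mem_Icc (μ := π) (a := -K) (b := K)
    (measurable_integralFinCons hf).aemeasurable
    (ae_of_all _ fun D => abs_le.mp (abs_integralFinCons_le (μ := μ) hK D))).integrable_exp_mul t
  calc mgf (fun D => f D - ∫ D', f D' ∂(Measure.pi fun _ => μ)) (Measure.pi fun _ => μ) t
      = ∫ D, ∫ z, Real.exp (t * (f (Fin.cons z D) - ∫ D', g D' ∂π)) ∂μ ∂π := by
        rw [mgf, integral_pi_fin_succ μ hexp_f, integral_integralFinCons hf hK]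
    _ = ∫ D, Real.exp (t * (g D - ∫ D', g D' ∂π)) *
          mgf (fun z => f (Fin.cons z D) - g D) μ t ∂π := by
        refine integral_congr_ae (ae_of_all _ fun D => ?_)
        simp only [mgf, ← integral_const_mul, ← Real.exp_add]
        congr with z
        congr 1
        ring
    _ ≤ ∫ D, Real.exp (t * (g D - ∫ D', g D' ∂π)) * Real.exp (c ^ 2 * t ^ 2 / 2) ∂π :=
        integral_mono_of_nonneg (ae_of_all _ fun D => mul_nonneg (Real.exp_pos _).le mgf_nonneg)
          (hexp_g.mul_const _) (ae_of_all _ fun D => mul_le_mul_of_nonneg_left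
            ((hasSubgaussianMGF_comp_fin_cons_sub_integralFinCons hf hK hc D).mgf_le t)
            (Real.exp_pos _).le)
    _ = _ := integral_mul_const _ _

end FinCons

variable (μ) in
theorem hasSubgaussianMGF_sub_integral_of_abs_update_sub_le {n : ℕ} {f : (Fin n → Ω) → ℝ}
    {K : ℝ} {c : ℝ≥0} (hf : Measurable f) (hK : ∀ D, |f D| ≤ K)
    (hc : ∀ D i z, |f (Function.update D i z) - f D| ≤ c) :
    HasSubgaussianMGF (fun D => f D - ∫ D', f D' ∂(Measure.pi fun _ => μ)) (n * c ^ 2)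
      (Measure.pi fun _ => μ) := by
  induction n with
  | zero =>
    convert HasSubgaussianMGF.fun_zero (μ := Measure.pi fun _ : Fin 0 => μ) using 1
    · ext D
      simp [Subsingleton.elim _ D]
    · simp
  | succ n ih =>
    have hIH := ih (measurable_integralFinCons hf) (abs_integralFinCons_le (μ := μ) hK)
      (abs_integralFinCons_update_sub_le hf hK hc)
    refine ⟨(hasSubgaussianMGF_of_mem_Icc (μ := Measure.pi fun _ => μ) (a := -K) (b := K)
      hf.aemeasurable (ae_of_all _ fun D => abs_le.mp (hK D))).integrable_exp_mul, fun t => ?_⟩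
    calc _ ≤ _ := mgf_sub_integral_le_mgf_integralFinCons hf hK (fun D z => hc D 0 z) t
      _ ≤ Real.exp (n * c ^ 2 * t ^ 2 / 2) * Real.exp (c ^ 2 * t ^ 2 / 2) := by
          gcongr
          exact_mod_cast hIH.mgf_le t
      _ = Real.exp (((n + 1 : ℕ) * c ^ 2 : ℝ≥0) * t ^ 2 / 2) := by
          rw [← Real.exp_add]
          push_cast
          ring_nf

end BoundedDifferences

theorem Fintype.sum_comp_update_sub_sum {α ι M : Type*} [Fintype ι] [DecidableEq ι]
    [AddCommGroup M] (φ : α → M) (D : ι → α) (i : ι) (z : α) :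
    ∑ k, φ (Function.update D i z k) - ∑ k, φ (D k) = φ z - φ (D i) := by
  have h (w : α) :
      ∑ k, φ (Function.update D i w k) = φ w + ∑ k ∈ univ \ {i}, φ (D k) := by
    simp_rw [Function.apply_update (fun _ => φ), Finset.sum_update_of_mem (mem_univ i)]
  conv_lhs => rw [h z, ← Function.update_eq_self i D, h (D i), Function.update_eq_self]
  abel

section CenteredSum

variable {Ω E : Type*} [MeasurableSpace Ω] {μ : Measure Ω} [NormedAddCommGroup E]
  [NormedSpace ℝ E] {ξ : Ω → E} {B : ℝ}

variable (μ) in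
def centeredSum (ξ : Ω → E) {n : ℕ} (D : Fin n → Ω) : E :=
  ∑ k, (ξ (D k) - ∫ ω, ξ ω ∂μ)

theorem abs_norm_centeredSum_update_sub_le (hB : ∀ ω, ‖ξ ω‖ ≤ B) {n : ℕ} (D : Fin n → Ω)
    (i : Fin n) (z : Ω) :
    |‖centeredSum μ ξ (Function.update D i z)‖ - ‖centeredSum μ ξ D‖| ≤ 2 * B := by
  refine (abs_norm_sub_norm_le _ _).trans ?_
  rw [centeredSum, centeredSum, Fintype.sum_comp_update_sub_sum (fun ω => ξ ω - ∫ ω', ξ ω' ∂μ),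
    sub_sub_sub_cancel_right]
  linarith [norm_sub_le (ξ z) (ξ (D i)), hB z, hB (D i)]

variable [IsProbabilityMeasure μ]

theorem norm_sub_integral_le (hB : ∀ ω, ‖ξ ω‖ ≤ B) (ω : Ω) :
    ‖ξ ω - ∫ ω', ξ ω' ∂μ‖ ≤ 2 * B := by
  have := norm_integral_le_of_norm_le_const (μ := μ) (ae_of_all _ hB)
  simp only [probReal_univ, mul_one] at this
  linarith [norm_sub_le (ξ ω) (∫ ω', ξ ω' ∂μ), hB ω]

theorem norm_centeredSum_le (hB : ∀ ω, ‖ξ ω‖ ≤ B) {n : ℕ} (D : Fin n → Ω) :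
    ‖centeredSum μ ξ D‖ ≤ n * (2 * B) := by
  simpa [centeredSum] using norm_sum_le_of_le univ fun k _ => norm_sub_integral_le (μ := μ) hB (D k)

end CenteredSum

section HilbertSums

variable {Ω E : Type*} [MeasurableSpace Ω] {μ : Measure Ω} [IsProbabilityMeasure μ]
  [NormedAddCommGroup E] [InnerProductSpace ℝ E] [CompleteSpace E]

theorem integral_norm_add_sq {η : Ω → E} (hη : Integrable η μ)
    (hη2 : Integrable (fun z => ‖η z‖ ^ 2) μ) (hmean : ∫ z, η z ∂μ = 0) (v : E) :
    ∫ z, ‖η z + v‖ ^ 2 ∂μ = ∫ z, ‖η z‖ ^ 2 ∂μ + ‖v‖ ^ 2 := by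
  have hinner : Integrable (fun z => 2 * ⟪v, η z⟫) μ := (hη.const_inner v).const_mul 2
  have h12 : Integrable (fun z => ‖η z‖ ^ 2 + 2 * ⟪v, η z⟫) μ := hη2.add hinner
  simp_rw [norm_add_sq_real, real_inner_comm v (η _)]
  rw [integral_add h12 (integrable_const _), integral_add hη2 hinner, integral_const_mul,
    integral_inner hη, hmean]
  simp

variable [MeasurableSpace E] [BorelSpace E] [SecondCountableTopology E]

theorem integral_norm_sum_sq_le {η : Ω → E} (hη : Measurable η) {b : ℝ}
    (hb : ∀ z, ‖η z‖ ≤ b) (hmean : ∫ z, η z ∂μ = 0) (n : ℕ) :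
    ∫ D, ‖∑ k, η (D k)‖ ^ 2 ∂(Measure.pi fun _ : Fin n => μ) ≤ n * b ^ 2 := by
  have hb0 : 0 ≤ b := (norm_nonneg _).trans (hb (nonempty_of_isProbabilityMeasure μ).some)
  have hb2 (z : Ω) : ‖‖η z‖ ^ 2‖ ≤ b ^ 2 := by
    rw [norm_pow, norm_norm]
    gcongr
    exact hb z
  have hη2 : Integrable (fun z => ‖η z‖ ^ 2) μ :=
    .of_bound (hη.norm.pow_const 2).aestronglyMeasurable (b ^ 2) (ae_of_all _ hb2)
  have hsq_le : ∫ z, ‖η z‖ ^ 2 ∂μ ≤ b ^ 2 :=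
    (le_abs_self _).trans (by simpa using norm_integral_le_of_norm_le_const (ae_of_all μ hb2))
  have hint (m : ℕ) :
      Integrable (fun D : Fin m → Ω => ‖∑ k, η (D k)‖ ^ 2) (Measure.pi fun _ => μ) := by
    refine .of_bound ((Finset.measurable_sum _ fun k _ =>
      hη.comp (measurable_pi_apply k)).norm.pow_const 2).aestronglyMeasurable ((m * b) ^ 2)
      (ae_of_all _ fun D => ?_)
    rw [norm_pow, norm_norm]
    gcongr
    simpa using norm_sum_le_of_le univ fun k _ => hb (D k)
  induction n with
  | zero => simp
  | succ n ih =>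
    calc ∫ D, ‖∑ k, η (D k)‖ ^ 2 ∂(Measure.pi fun _ => μ)
        = ∫ D, ∫ z, ‖η z + ∑ k, η (D k)‖ ^ 2 ∂μ ∂(Measure.pi fun _ : Fin n => μ) := by
          rw [integral_pi_fin_succ μ (hint _)]
          simp [Fin.sum_univ_succ]
      _ = ∫ z, ‖η z‖ ^ 2 ∂μ + ∫ D, ‖∑ k, η (D k)‖ ^ 2 ∂(Measure.pi fun _ : Fin n => μ) := by
          simp_rw [integral_norm_add_sq (.of_bound hη.aestronglyMeasurable b (ae_of_all _ hb))
            hη2 hmean]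
          rw [integral_add (integrable_const _) (hint n), integral_const]
          simp
      _ ≤ b ^ 2 + n * b ^ 2 := add_le_add hsq_le ih
      _ = (n + 1 : ℕ) * b ^ 2 := by push_cast; ring

theorem integral_norm_sum_le {η : Ω → E} (hη : Measurable η) {b : ℝ}
    (hb : ∀ z, ‖η z‖ ≤ b) (hmean : ∫ z, η z ∂μ = 0) (n : ℕ) :
    ∫ D, ‖∑ k, η (D k)‖ ∂(Measure.pi fun _ : Fin n => μ) ≤ b * √n := by
  have hb0 : 0 ≤ b := (norm_nonneg _).trans (hb (nonempty_of_isProbabilityMeasure μ).some)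
  have hX : MemLp (fun D : Fin n → Ω => ‖∑ k, η (D k)‖) 2 (Measure.pi fun _ => μ) :=
    .of_bound (Finset.measurable_sum _ fun k _ =>
      hη.comp (measurable_pi_apply k)).norm.aestronglyMeasurable (n * b)
      (ae_of_all _ fun D => by simpa using norm_sum_le_of_le univ fun k _ => hb (D k))
  have hvar := variance_nonneg (fun D : Fin n → Ω => ‖∑ k, η (D k)‖)
    (Measure.pi fun _ => μ)
  rw [variance_eq_sub hX] at hvar
  simp only [Pi.pow_apply] at hvar
  refine (pow_le_pow_iff_left₀ (integral_nonneg fun _ => norm_nonneg _) (by positivity)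
    two_ne_zero).mp ?_
  rw [mul_pow, Real.sq_sqrt n.cast_nonneg]
  linarith [integral_norm_sum_sq_le hη hb hmean n]

variable {ξ : Ω → E} {B : ℝ}

theorem integral_norm_centeredSum_le (hξ : Measurable ξ) (hB : ∀ ω, ‖ξ ω‖ ≤ B) (n : ℕ) :
    ∫ D, ‖centeredSum μ ξ D‖ ∂(Measure.pi fun _ : Fin n => μ) ≤ 2 * B * √n := by
  have hξ1 : Integrable ξ μ := .of_bound hξ.aestronglyMeasurable B (ae_of_all _ hB)
  exact integral_norm_sum_le (hξ.sub measurable_const) (norm_sub_integral_le hB)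
    (by simp [integral_sub hξ1 (integrable_const _)]) n

theorem measure_lt_norm_centeredSum_le (hξ : Measurable ξ) (hB : ∀ ω, ‖ξ ω‖ ≤ B) (n : ℕ)
    {δ : ℝ} (hδ : 0 < δ) (hδ1 : δ ≤ 1) :
    (Measure.pi fun _ : Fin n => μ)
      {D | 2 * B * (√n + √(2 * n * Real.log (1 / δ))) < ‖centeredSum μ ξ D‖}
      ≤ ENNReal.ofReal δ := by
  have hB0 : 0 ≤ B := (norm_nonneg _).trans (hB (nonempty_of_isProbabilityMeasure μ).some)
  have hlog : 0 ≤ Real.log (1 / δ) := Real.log_nonneg (one_le_one_div hδ hδ1)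
  -- The Chernoff bound below divides by the variance proxy `n (2B)²`, so `n B = 0` is treated
  -- apart: then the sum vanishes and the event is empty.
  rcases (mul_nonneg n.cast_nonneg hB0).eq_or_lt with hnB | hnB
  · refine (measure_mono fun D (hD : _ < ‖centeredSum μ ξ D‖) => ?_ :
      _ ≤ (Measure.pi fun _ => μ) ∅).trans (by simp)
    have := norm_centeredSum_le (μ := μ) hB D
    have : 0 ≤ 2 * B * (√n + √(2 * n * Real.log (1 / δ))) := by positivity
    nlinarith
  set c : ℝ≥0 := ⟨2 * B, by positivity⟩
  have hc : (c : ℝ) = 2 * B := rfl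
  set ε := 2 * B * √(2 * n * Real.log (1 / δ))
  have hf : Measurable fun D : Fin n → Ω => ‖centeredSum μ ξ D‖ :=
    (Finset.measurable_sum _ fun k _ => (hξ.comp (measurable_pi_apply k)).sub measurable_const).norm
  have htail := (hasSubgaussianMGF_sub_integral_of_abs_update_sub_le μ hf (K := n * (2 * B))
    (c := c) (fun D => (abs_norm _).trans_le (norm_centeredSum_le hB D))
    (abs_norm_centeredSum_update_sub_le hB)).measure_ge_le (ε := ε) (by positivity)
  have hexp : -ε ^ 2 / (2 * ((n * c ^ 2 : ℝ≥0) : ℝ)) = Real.log δ := by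
    have hB' : 0 < B := pos_of_mul_pos_right hnB n.cast_nonneg
    have hn : (0 : ℝ) < n := pos_of_mul_pos_left hnB hB0
    rw [mul_pow, Real.sq_sqrt (by positivity), NNReal.coe_mul, NNReal.coe_pow, hc,
      NNReal.coe_natCast, one_div, Real.log_inv]
    field_simp
  rw [hexp, Real.exp_log hδ] at htail
  refine (measure_mono fun D (hD : _ < ‖centeredSum μ ξ D‖) => ?_).trans
    ((ENNReal.le_ofReal_iff_toReal_le (measure_ne_top _ _) hδ.le).mpr htail)
  change ε ≤ ‖centeredSum μ ξ D‖ - _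
  linarith [integral_norm_centeredSum_le (μ := μ) hξ hB n]

end HilbertSums

theorem ofReal_one_sub_le_measure_of_union_bound {α : Type*} [MeasurableSpace α]
    {μ : Measure α} [IsProbabilityMeasure μ] {s₁ s₂ s₃ G T : Set α} {δ : ℝ}
    (hδ : 0 ≤ δ)
    (h₁ : μ s₁ ≤ ENNReal.ofReal (δ / 3)) (h₂ : μ s₂ ≤ ENNReal.ofReal (δ / 3))
    (h₃ : μ s₃ ≤ ENNReal.ofReal (δ / 3)) (hG : ∀ᵐ x ∂μ, x ∈ G)
    (hT : ∀ x ∈ G, x ∉ s₁ → x ∉ s₂ → x ∉ s₃ → x ∈ T) :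
    ENNReal.ofReal (1 - δ) ≤ μ T := by
  set bad := s₁ ∪ s₂ ∪ s₃ ∪ Gᶜ
  have hbad : μ bad ≤ ENNReal.ofReal δ := by
    calc μ bad ≤ μ (s₁ ∪ s₂ ∪ s₃) + μ Gᶜ := measure_union_le _ _
      _ ≤ μ (s₁ ∪ s₂) + μ s₃ + μ Gᶜ := by gcongr; exact measure_union_le _ _
      _ ≤ μ s₁ + μ s₂ + μ s₃ + μ Gᶜ := by gcongr; exact measure_union_le _ _
      _ ≤ ENNReal.ofReal (δ / 3) + ENNReal.ofReal (δ / 3) + ENNReal.ofReal (δ / 3) + 0 := by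
          gcongr
          exact (measure_mono_null (fun x hx => hx) hG).le
      _ = ENNReal.ofReal δ := by
          rw [add_zero, ← ENNReal.ofReal_add (by positivity) (by positivity),
            ← ENNReal.ofReal_add (by positivity) (by positivity)]
          ring_nf
  refine le_trans ?_ (measure_mono (s := badᶜ) fun x hx => ?_)
  · rw [ENNReal.ofReal_sub _ hδ, ENNReal.ofReal_one, tsub_le_iff_right]
    calc (1 : ℝ≥0∞) = μ Set.univ := measure_univ.symm
      _ ≤ μ badᶜ + μ badᶜᶜ := measure_univ_le_add_compl _
      _ ≤ μ badᶜ + ENNReal.ofReal δ := by rw [compl_compl]; gcongr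
  · simp only [bad, Set.mem_compl_iff, Set.mem_union, not_or, not_not] at hx
    exact hT x hx.2 hx.1.1.1 hx.1.1.2 hx.1.2

section TensorVec

variable {ι κ : Type*}

def tensorVec (u : EuclideanSpace ℝ ι) (v : EuclideanSpace ℝ κ) :
    EuclideanSpace ℝ (ι × κ) :=
  WithLp.toLp 2 fun p => u p.1 * v p.2

def matVec (A : Matrix ι κ ℝ) : EuclideanSpace ℝ (ι × κ) :=
  WithLp.toLp 2 fun p => A p.1 p.2

theorem inner_tensorVec_tensorVec [Fintype ι] [Fintype κ] (u u' : EuclideanSpace ℝ ι)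
    (v v' : EuclideanSpace ℝ κ) :
    ⟪tensorVec u v, tensorVec u' v'⟫ = ⟪u, u'⟫ * ⟪v, v'⟫ := by
  simp only [tensorVec, PiLp.inner_apply, Fintype.sum_prod_type, Finset.sum_mul_sum,
    RCLike.inner_apply, conj_trivial]
  exact Finset.sum_congr rfl fun i _ => Finset.sum_congr rfl fun j _ => by ring

theorem norm_tensorVec [Fintype ι] [Fintype κ] (u : EuclideanSpace ℝ ι)
    (v : EuclideanSpace ℝ κ) : ‖tensorVec u v‖ = ‖u‖ * ‖v‖ := by
  rw [← sq_eq_sq₀ (norm_nonneg _) (by positivity), mul_pow, ← real_inner_self_eq_norm_sq,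
    ← real_inner_self_eq_norm_sq, ← real_inner_self_eq_norm_sq, inner_tensorVec_tensorVec]

theorem continuous_tensorVec :
    Continuous fun p : EuclideanSpace ℝ ι × EuclideanSpace ℝ κ => tensorVec p.1 p.2 := by
  unfold tensorVec
  fun_prop

end TensorVec

theorem norm2_eq_norm {d : ℕ} (x : Fin d → ℝ) : norm2 x = ‖WithLp.toLp 2 x‖ := by
  simp [norm2, EuclideanSpace.norm_eq]

theorem frobNorm_eq_norm_matVec {d : ℕ} (A : Matrix (Fin d) (Fin d) ℝ) :
    frobNorm A = ‖matVec A‖ := by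
  simp [frobNorm, matVec, EuclideanSpace.norm_eq, Fintype.sum_prod_type]

theorem qForm_eq_inner {d : ℕ} (A : Matrix (Fin d) (Fin d) ℝ) (x x' : Fin d → ℝ) :
    qForm A x x' = ⟪matVec A, tensorVec (WithLp.toLp 2 x) (WithLp.toLp 2 x')⟫ := by
  simp only [qForm, matVec, tensorVec, PiLp.inner_apply, Fintype.sum_prod_type,
    RCLike.inner_apply, conj_trivial]
  exact Finset.sum_congr rfl fun i _ => Finset.sum_congr rfl fun j _ => by ring

section LossFeatures

variable {d L : ℕ}

def outerVec (z z' : Pt d L) : EuclideanSpace ℝ (Fin d × Fin d) :=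
  tensorVec (WithLp.toLp 2 z.1) (WithLp.toLp 2 z'.1)

def lossConst (g : ℝ → ℝ) (z z' : Pt d L) : ℝ :=
  g (ipY z.2 z'.2) * ipY z.2 z'.2 ^ 2

def lossLin (g : ℝ → ℝ) (z z' : Pt d L) : EuclideanSpace ℝ (Fin d × Fin d) :=
  (g (ipY z.2 z'.2) * ipY z.2 z'.2) • outerVec z z'

def lossQuad (g : ℝ → ℝ) (z z' : Pt d L) :
    EuclideanSpace ℝ ((Fin d × Fin d) × (Fin d × Fin d)) :=
  g (ipY z.2 z'.2) • tensorVec (outerVec z z') (outerVec z z')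

theorem lossFn_eq (g : ℝ → ℝ) (lam : ℝ) (A : Matrix (Fin d) (Fin d) ℝ) (z z' : Pt d L) :
    lossFn g lam A z z' = lossConst g z z' + ⟪(-2 : ℝ) • matVec A, lossLin g z z'⟫
      + ⟪tensorVec (matVec A) (matVec A), lossQuad g z z'⟫ + lam * A.trace := by
  simp only [lossFn, lossConst, lossLin, lossQuad, qForm_eq_inner, real_inner_smul_left,
    real_inner_smul_right, inner_tensorVec_tensorVec, outerVec]
  ring

theorem ipY_comm (y y' : Fin L → ℝ) : ipY y y' = ipY y' y := by
  simp only [ipY, mul_comm]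

theorem qForm_comm {A : Matrix (Fin d) (Fin d) ℝ} (hA : A.IsHermitian) (x x' : Fin d → ℝ) :
    qForm A x x' = qForm A x' x := by
  rw [qForm, qForm, Finset.sum_comm]
  refine Finset.sum_congr rfl fun j _ => Finset.sum_congr rfl fun i _ => ?_
  rw [← hA.apply j i, star_trivial]
  ring

theorem lossFn_comm (g : ℝ → ℝ) (lam : ℝ) {A : Matrix (Fin d) (Fin d) ℝ}
    (hA : A.IsHermitian) (z z' : Pt d L) : lossFn g lam A z z' = lossFn g lam A z' z := by
  rw [lossFn, lossFn, ipY_comm, qForm_comm hA]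

theorem norm_outerVec (z z' : Pt d L) : ‖outerVec z z'‖ = norm2 z.1 * norm2 z'.1 := by
  rw [outerVec, norm_tensorVec, norm2_eq_norm, norm2_eq_norm]

variable {g : ℝ → ℝ} {S : Set (Pt d L)} {R Lbar : ℝ}

theorem norm_lossConst_le (hg : ∀ t, 0 ≤ g t ∧ g t ≤ 1)
    (hSL : ∀ z ∈ S, ∀ z' ∈ S, 0 ≤ ipY z.2 z'.2 ∧ ipY z.2 z'.2 ≤ Lbar) :
    ∀ z ∈ S, ∀ z' ∈ S, ‖lossConst g z z'‖ ≤ Lbar ^ 2 := by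
  intro z hz z' hz'
  obtain ⟨ht0, htL⟩ := hSL z hz z' hz'
  obtain ⟨hg0, hg1⟩ := hg (ipY z.2 z'.2)
  rw [lossConst, Real.norm_eq_abs, abs_of_nonneg (by positivity)]
  calc _ ≤ 1 * ipY z.2 z'.2 ^ 2 := by gcongr
    _ ≤ Lbar ^ 2 := by rw [one_mul]; gcongr

theorem norm_lossLin_le (hg : ∀ t, 0 ≤ g t ∧ g t ≤ 1) (hSR : ∀ z ∈ S, norm2 z.1 ≤ R)
    (hSL : ∀ z ∈ S, ∀ z' ∈ S, 0 ≤ ipY z.2 z'.2 ∧ ipY z.2 z'.2 ≤ Lbar) :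
    ∀ z ∈ S, ∀ z' ∈ S, ‖lossLin g z z'‖ ≤ Lbar * R ^ 2 := by
  intro z hz z' hz'
  obtain ⟨ht0, htL⟩ := hSL z hz z' hz'
  obtain ⟨hg0, hg1⟩ := hg (ipY z.2 z'.2)
  have hx := hSR z hz
  have hx' := hSR z' hz'
  have h0 : 0 ≤ norm2 z.1 := Real.sqrt_nonneg _
  have h0' : 0 ≤ norm2 z'.1 := Real.sqrt_nonneg _
  have hgt : g (ipY z.2 z'.2) * ipY z.2 z'.2 ≤ Lbar := by nlinarith
  have hR : 0 ≤ R := h0.trans hx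
  have hL : 0 ≤ Lbar := ht0.trans htL
  rw [lossLin, norm_smul, norm_outerVec, Real.norm_eq_abs, abs_of_nonneg (by positivity), sq]
  gcongr

theorem norm_lossQuad_le (hg : ∀ t, 0 ≤ g t ∧ g t ≤ 1) (hSR : ∀ z ∈ S, norm2 z.1 ≤ R) :
    ∀ z ∈ S, ∀ z' ∈ S, ‖lossQuad g z z'‖ ≤ R ^ 4 := by
  intro z hz z' hz'
  obtain ⟨hg0, hg1⟩ := hg (ipY z.2 z'.2)
  rw [lossQuad, norm_smul, norm_tensorVec, norm_outerVec, Real.norm_eq_abs, abs_of_nonneg hg0]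
  have hx := hSR z hz
  have hx' := hSR z' hz'
  have h0 : 0 ≤ norm2 z.1 := Real.sqrt_nonneg _
  have h0' : 0 ≤ norm2 z'.1 := Real.sqrt_nonneg _
  have hR : 0 ≤ R := h0.trans hx
  calc _ ≤ 1 * ((R * R) * (R * R)) := by gcongr
    _ = R ^ 4 := by ring

theorem continuous_ipY : Continuous fun w : Pt d L × Pt d L => ipY w.1.2 w.2.2 := by
  unfold ipY
  fun_prop

theorem continuous_outerVec : Continuous fun w : Pt d L × Pt d L => outerVec w.1 w.2 :=
  continuous_tensorVec.comp
    (((PiLp.continuous_toLp 2 _).comp (continuous_fst.comp continuous_fst)).prodMk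
      ((PiLp.continuous_toLp 2 _).comp (continuous_fst.comp continuous_snd)))

theorem measurable_lossConst (hg : Measurable g) :
    Measurable (Function.uncurry (lossConst (d := d) (L := L) g)) :=
  (hg.comp continuous_ipY.measurable).mul (continuous_ipY.measurable.pow_const 2)

theorem measurable_lossLin (hg : Measurable g) :
    Measurable (Function.uncurry (lossLin (d := d) (L := L) g)) :=
  ((hg.comp continuous_ipY.measurable).mul continuous_ipY.measurable).smul
    continuous_outerVec.measurable

theorem measurable_lossQuad (hg : Measurable g) :
    Measurable (Function.uncurry (lossQuad (d := d) (L := L) g)) :=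
  (hg.comp continuous_ipY.measurable).smul
    (continuous_tensorVec.comp (continuous_outerVec.prodMk continuous_outerVec)).measurable

end LossFeatures

section SectionMean

variable {Ω E : Type*} [MeasurableSpace Ω] {P : Measure Ω} {S : Set Ω}
  [NormedAddCommGroup E] {k : Ω → Ω → E} {B : ℝ}

theorem integrable_apply_right_of_mem [MeasurableSpace E] [BorelSpace E]
    [SecondCountableTopology E] [IsFiniteMeasure P] (hS : ∀ᵐ z ∂P, z ∈ S)
    (hk : Measurable (Function.uncurry k)) (hkB : ∀ z ∈ S, ∀ z' ∈ S, ‖k z z'‖ ≤ B)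
    {z' : Ω} (hz' : z' ∈ S) : Integrable (fun z => k z z') P :=
  .of_bound (hk.comp measurable_prodMk_right).aestronglyMeasurable B
    (hS.mono fun z hz => hkB z hz z' hz')

variable [NormedSpace ℝ E]

-- The indicator makes the section means bounded everywhere, as the concentration bound for
-- sums requires; since `P S = 1` this changes nothing almost surely.
def sectionMean (P : Measure Ω) (S : Set Ω) (k : Ω → Ω → E) : Ω → E :=
  S.indicator fun z' => ∫ z, k z z' ∂P

theorem measurable_sectionMean [MeasurableSpace E] [BorelSpace E] [SecondCountableTopology E]
    [SFinite P] (hSm : MeasurableSet S) (hk : Measurable (Function.uncurry k)) :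
    Measurable (sectionMean P S k) :=
  (hk.stronglyMeasurable.integral_prod_left'.measurable).indicator hSm

variable [IsProbabilityMeasure P]

theorem norm_sectionMean_le_of_mem (hS : ∀ᵐ z ∂P, z ∈ S)
    (hkB : ∀ z ∈ S, ∀ z' ∈ S, ‖k z z'‖ ≤ B) {z' : Ω} (hz' : z' ∈ S) :
    ‖sectionMean P S k z'‖ ≤ B := by
  simpa [sectionMean, hz'] using
    norm_integral_le_of_norm_le_const (hS.mono fun z hz => hkB z hz z' hz')

theorem norm_sectionMean_le (hS : ∀ᵐ z ∂P, z ∈ S)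
    (hkB : ∀ z ∈ S, ∀ z' ∈ S, ‖k z z'‖ ≤ B) (hB : 0 ≤ B) (z' : Ω) :
    ‖sectionMean P S k z'‖ ≤ B := by
  by_cases hz' : z' ∈ S
  · exact norm_sectionMean_le_of_mem hS hkB hz'
  · simpa [sectionMean, hz'] using hB

theorem integrable_sectionMean [MeasurableSpace E] [BorelSpace E] [SecondCountableTopology E]
    (hSm : MeasurableSet S) (hS : ∀ᵐ z ∂P, z ∈ S) (hk : Measurable (Function.uncurry k))
    (hkB : ∀ z ∈ S, ∀ z' ∈ S, ‖k z z'‖ ≤ B) : Integrable (sectionMean P S k) P :=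
  .of_bound (measurable_sectionMean hSm hk).aestronglyMeasurable B
    (hS.mono fun _ hz' => norm_sectionMean_le_of_mem hS hkB hz')

end SectionMean

section AffineKernels

variable {Ω E F : Type*} [MeasurableSpace Ω] {P : Measure Ω} [IsProbabilityMeasure P]
  {S : Set Ω} [NormedAddCommGroup E] [InnerProductSpace ℝ E] [CompleteSpace E]
  [NormedAddCommGroup F] [InnerProductSpace ℝ F] [CompleteSpace F]

theorem integral_affine {f₀ : Ω → ℝ} {V : Ω → E} {W : Ω → F}
    (hf₀ : Integrable f₀ P) (hV : Integrable V P) (hW : Integrable W P) (a : E) (b : F) (c : ℝ) :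
    ∫ z, (f₀ z + ⟪a, V z⟫ + ⟪b, W z⟫ + c) ∂P =
      ∫ z, f₀ z ∂P + ⟪a, ∫ z, V z ∂P⟫ + ⟪b, ∫ z, W z ∂P⟫ + c := by
  rw [integral_add _ (integrable_const c), integral_add _ (hW.const_inner b),
    integral_add hf₀ (hV.const_inner a), integral_inner hV, integral_inner hW]
  · simp
  · exact hf₀.add (hV.const_inner a)
  · exact (hf₀.add (hV.const_inner a)).add (hW.const_inner b)

theorem centeredSum_eq_of_affine {h f₀ : Ω → ℝ} {V : Ω → E} {W : Ω → F} {a : E} {b : F}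
    {c : ℝ} (hS : ∀ᵐ z ∂P, z ∈ S) (hf₀ : Integrable f₀ P) (hV : Integrable V P)
    (hW : Integrable W P) (hh : ∀ z ∈ S, h z = f₀ z + ⟪a, V z⟫ + ⟪b, W z⟫ + c)
    {n : ℕ} {D : Fin n → Ω} (hD : ∀ k, D k ∈ S) :
    centeredSum P h D =
      centeredSum P f₀ D + ⟪a, centeredSum P V D⟫ + ⟪b, centeredSum P W D⟫ := by
  have hint :
      ∫ z, h z ∂P = ∫ z, f₀ z ∂P + ⟪a, ∫ z, V z ∂P⟫ + ⟪b, ∫ z, W z ∂P⟫ + c := by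
    rw [integral_congr_ae (hS.mono hh), integral_affine hf₀ hV hW]
  simp only [centeredSum, inner_sum, inner_sub_right, hh _ (hD _), hint,
    ← Finset.sum_add_distrib]
  exact Finset.sum_congr rfl fun k _ => by ring

variable [MeasurableSpace E] [BorelSpace E] [SecondCountableTopology E]
  [MeasurableSpace F] [BorelSpace F] [SecondCountableTopology F]

theorem integral_eq_affine_sectionMean {ℓ κ₀ : Ω → Ω → ℝ} {κ₁ : Ω → Ω → E}
    {κ₂ : Ω → Ω → F} {B₀ B₁ B₂ : ℝ} (hS : ∀ᵐ z ∂P, z ∈ S)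
    (hκ₀ : Measurable (Function.uncurry κ₀))
    (hκ₀B : ∀ z ∈ S, ∀ z' ∈ S, ‖κ₀ z z'‖ ≤ B₀) (hκ₁ : Measurable (Function.uncurry κ₁))
    (hκ₁B : ∀ z ∈ S, ∀ z' ∈ S, ‖κ₁ z z'‖ ≤ B₁) (hκ₂ : Measurable (Function.uncurry κ₂))
    (hκ₂B : ∀ z ∈ S, ∀ z' ∈ S, ‖κ₂ z z'‖ ≤ B₂) (a : E) (b : F) (c : ℝ)
    (hℓ : ∀ z z', ℓ z z' = κ₀ z z' + ⟪a, κ₁ z z'⟫ + ⟪b, κ₂ z z'⟫ + c) {z' : Ω}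
    (hz' : z' ∈ S) :
    ∫ z, ℓ z z' ∂P = sectionMean P S κ₀ z' + ⟪a, sectionMean P S κ₁ z'⟫
      + ⟪b, sectionMean P S κ₂ z'⟫ + c := by
  simp only [hℓ, sectionMean, Set.indicator_of_mem hz']
  exact integral_affine (integrable_apply_right_of_mem hS hκ₀ hκ₀B hz')
    (integrable_apply_right_of_mem hS hκ₁ hκ₁B hz')
    (integrable_apply_right_of_mem hS hκ₂ hκ₂B hz') a b c

end AffineKernels

section Risk

variable {d L : ℕ} {g : ℝ → ℝ} {P : Measure (Pt d L)} {S : Set (Pt d L)} {R Lbar : ℝ}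

theorem popRisk_eq_integral_integral_swap (lam : ℝ) {A : Matrix (Fin d) (Fin d) ℝ}
    (hA : A.IsHermitian) :
    popRisk g lam P A = ∫ z', ∫ z, lossFn g lam A z z' ∂P ∂P :=
  integral_congr_ae (ae_of_all _ fun z' => integral_congr_ae (ae_of_all _ fun z =>
    lossFn_comm g lam hA z' z))

variable [IsProbabilityMeasure P]

theorem tilRisk_sub_popRisk_eq (hg : Measurable g) (hg01 : ∀ t, 0 ≤ g t ∧ g t ≤ 1)
    (hSm : MeasurableSet S) (hS : ∀ᵐ z ∂P, z ∈ S) (hSR : ∀ z ∈ S, norm2 z.1 ≤ R)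
    (hSL : ∀ z ∈ S, ∀ z' ∈ S, 0 ≤ ipY z.2 z'.2 ∧ ipY z.2 z'.2 ≤ Lbar) (lam : ℝ)
    {A : Matrix (Fin d) (Fin d) ℝ} (hA : A.IsHermitian) {n : ℕ} (hn : n ≠ 0)
    {D : Fin n → Pt d L} (hD : ∀ k, D k ∈ S) :
    tilRisk g lam P A D - popRisk g lam P A = (1 / n) *
      (centeredSum P (sectionMean P S (lossConst g)) D
        + ⟪(-2 : ℝ) • matVec A, centeredSum P (sectionMean P S (lossLin g)) D⟫
        + ⟪tensorVec (matVec A) (matVec A),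
            centeredSum P (sectionMean P S (lossQuad g)) D⟫) := by
  have h₀ := norm_lossConst_le hg01 hSL
  have h₁ := norm_lossLin_le hg01 hSR hSL
  have h₂ := norm_lossQuad_le hg01 hSR
  rw [← centeredSum_eq_of_affine hS
    (integrable_sectionMean hSm hS (measurable_lossConst hg) h₀)
    (integrable_sectionMean hSm hS (measurable_lossLin hg) h₁)
    (integrable_sectionMean hSm hS (measurable_lossQuad hg) h₂)
    (fun z' hz' => integral_eq_affine_sectionMean hS (measurable_lossConst hg) h₀
      (measurable_lossLin hg) h₁ (measurable_lossQuad hg) h₂ _ _ _ (lossFn_eq g lam A) hz') hD,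
    popRisk_eq_integral_integral_swap lam hA, tilRisk, centeredSum, Finset.sum_sub_distrib,
    Finset.sum_const, Finset.card_univ, Fintype.card_fin, nsmul_eq_mul]
  field_simp

theorem tilRisk_sub_popRisk_le (hg : Measurable g) (hg01 : ∀ t, 0 ≤ g t ∧ g t ≤ 1)
    (hSm : MeasurableSet S) (hS : ∀ᵐ z ∂P, z ∈ S) (hSR : ∀ z ∈ S, norm2 z.1 ≤ R)
    (hSL : ∀ z ∈ S, ∀ z' ∈ S, 0 ≤ ipY z.2 z'.2 ∧ ipY z.2 z'.2 ≤ Lbar) (lam : ℝ)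
    {A : Matrix (Fin d) (Fin d) ℝ} (hA : A.IsHermitian) {r : ℝ} (hAr : frobNorm A ≤ r)
    {n : ℕ} (hn : n ≠ 0) {D : Fin n → Pt d L} (hD : ∀ k, D k ∈ S) {u : ℝ}
    (h₀ : ‖centeredSum P (sectionMean P S (lossConst g)) D‖ ≤ Lbar ^ 2 * u)
    (h₁ : ‖centeredSum P (sectionMean P S (lossLin g)) D‖ ≤ Lbar * R ^ 2 * u)
    (h₂ : ‖centeredSum P (sectionMean P S (lossQuad g)) D‖ ≤ R ^ 4 * u) :
    tilRisk g lam P A D - popRisk g lam P A ≤ (r * R ^ 2 + Lbar) ^ 2 * (u / n) := by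
  rw [tilRisk_sub_popRisk_eq hg hg01 hSm hS hSR hSL lam hA hn hD]
  have hA0 : 0 ≤ frobNorm A := Real.sqrt_nonneg _
  have i₀ := (Real.le_norm_self _).trans h₀
  have i₁ := (real_inner_le_norm _ _).trans (mul_le_mul (a := ‖(-2 : ℝ) • matVec A‖)
    (b := 2 * r) (by rw [norm_smul, ← frobNorm_eq_norm_matVec]; norm_num; exact hAr) h₁
    (norm_nonneg _) (by linarith))
  have i₂ := (real_inner_le_norm _ _).trans (mul_le_mul
    (a := ‖tensorVec (matVec A) (matVec A)‖) (b := r ^ 2)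
    (by rw [norm_tensorVec, ← frobNorm_eq_norm_matVec, ← sq]; gcongr) h₂
    (norm_nonneg _) (by positivity))
  calc _ ≤ 1 / n * (Lbar ^ 2 * u + 2 * r * (Lbar * R ^ 2 * u) + r ^ 2 * (R ^ 4 * u)) := by
        gcongr
    _ = (r * R ^ 2 + Lbar) ^ 2 * (u / n) := by ring

end Risk

theorem two_mul_sqrt_add_sqrt_log_div_le {n : ℕ} (hn : 0 < n) {δ : ℝ} (hδ0 : 0 < δ)
    (hδ1 : δ ≤ 1) :
    2 * (√n + √(2 * n * Real.log (1 / (δ / 3)))) / n ≤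
      6 * √((1 + Real.log (1 / δ)) / n) := by
  set ℓ := Real.log (1 / δ)
  have hℓ : 0 ≤ ℓ := Real.log_nonneg (one_le_one_div hδ0 hδ1)
  have hlog3 : Real.log (1 / (δ / 3)) = Real.log 3 + ℓ := by
    rw [show 1 / (δ / 3) = 3 * (1 / δ) by field_simp, Real.log_mul (by norm_num) (by positivity)]
  have h3 : Real.log 3 ≤ 2 := by
    linarith [Real.log_le_sub_one_of_pos (show (0 : ℝ) < 3 by norm_num)]
  have hn0 : (0 : ℝ) < n := by exact_mod_cast hn
  have hs : 0 < √(n : ℝ) := Real.sqrt_pos.mpr hn0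
  have h1 : 1 ≤ √(1 + ℓ) := Real.one_le_sqrt.mpr (by linarith)
  have hX : √(2 * n * Real.log (1 / (δ / 3))) ≤ 2 * √n * √(1 + ℓ) := by
    calc _ ≤ √((2 * √n * √(1 + ℓ)) ^ 2) := by
          gcongr
          rw [mul_pow, mul_pow, Real.sq_sqrt hn0.le, Real.sq_sqrt (by linarith), hlog3]
          nlinarith
      _ = 2 * √n * √(1 + ℓ) := Real.sqrt_sq (by positivity)
  rw [div_le_iff₀ hn0, Real.sqrt_div' _ hn0.le]
  calc 2 * (√n + √(2 * n * Real.log (1 / (δ / 3))))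
      ≤ 2 * (√n * √(1 + ℓ) + 2 * √n * √(1 + ℓ)) := by gcongr; nlinarith
    _ = 6 * (√(1 + ℓ) / √n) * (√n * √n) := by field_simp; ring
    _ = 6 * (√(1 + ℓ) / √n) * n := by rw [Real.mul_self_sqrt hn0.le]

theorem stmt15 :
    ∃ C : ℝ, 0 < C ∧
    ∀ (d L : ℕ) (lam r R Lbar : ℝ), 0 < lam → 0 < r → 0 < R → 0 ≤ Lbar →
    ∀ g : ℝ → ℝ, Measurable g → (∀ t, 0 ≤ g t ∧ g t ≤ 1) →
    ∀ P : Measure (Pt d L), IsProbabilityMeasure P →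
    ∀ S : Set (Pt d L), MeasurableSet S → P S = 1 →
    (∀ z ∈ S, norm2 z.1 ≤ R) →
    (∀ z ∈ S, ∀ z' ∈ S, 0 ≤ ipY z.2 z'.2 ∧ ipY z.2 z'.2 ≤ Lbar) →
    ∀ n : ℕ, 2 ≤ n → Even n → ∀ δ : ℝ, 0 < δ → δ < 1 →
    ENNReal.ofReal (1 - δ) ≤
      (Measure.pi fun _ : Fin n => P) {D : Fin n → Pt d L |
        (⨆ A : {A : Matrix (Fin d) (Fin d) ℝ // A.PosSemidef ∧ frobNorm A ≤ r},
          tilRisk g lam P A.1 D - popRisk g lam P A.1) ≤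
        C * (r * R ^ 2 + Lbar) ^ 2 * Real.sqrt ((1 + Real.log (1 / δ)) / n)} := by
  refine ⟨6, by norm_num, ?_⟩
  intro d L lam r R Lbar _ _ hR hLbar g hg hg01 P _ S hSm hS1 hSR hSL n hn _ δ hδ0 hδ1
  have hS : ∀ᵐ z ∂P, z ∈ S := mem_ae_iff.mpr ((prob_compl_eq_zero_iff hSm).mpr hS1)
  have hn0 : 0 < n := by omega
  have hδ3 : 0 < δ / 3 := by positivity
  refine ofReal_one_sub_le_measure_of_union_bound (G := {D | ∀ k, D k ∈ S}) hδ0.le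
    (measure_lt_norm_centeredSum_le (measurable_sectionMean hSm (measurable_lossConst hg))
      (norm_sectionMean_le hS (norm_lossConst_le hg01 hSL) (by positivity)) n hδ3 (by linarith))
    (measure_lt_norm_centeredSum_le (measurable_sectionMean hSm (measurable_lossLin hg))
      (norm_sectionMean_le hS (norm_lossLin_le hg01 hSR hSL) (by positivity)) n hδ3 (by linarith))
    (measure_lt_norm_centeredSum_le (measurable_sectionMean hSm (measurable_lossQuad hg))
      (norm_sectionMean_le hS (norm_lossQuad_le hg01 hSR) (by positivity)) n hδ3 (by linarith))
    (ae_all_iff.mpr fun k : Fin n => Measure.tendsto_eval_ae_ae.eventually hS)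
    fun D hD h₀ h₁ h₂ => ?_
  rw [Set.mem_ofPred_eq]
  refine Real.iSup_le (fun ⟨A, hA, hAr⟩ => ?_) (by positivity)
  calc _ ≤ (r * R ^ 2 + Lbar) ^ 2 * (2 * (√n + √(2 * n * Real.log (1 / (δ / 3)))) / n) :=
        tilRisk_sub_popRisk_le hg hg01 hSm hS hSR hSL lam hA.isHermitian hAr hn0.ne' hD
          ((not_lt.mp h₀).trans_eq (by ring)) ((not_lt.mp h₁).trans_eq (by ring))
          ((not_lt.mp h₂).trans_eq (by ring))
    _ ≤ (r * R ^ 2 + Lbar) ^ 2 * (6 * √((1 + Real.log (1 / δ)) / n)) := by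
        gcongr
        exact two_mul_sqrt_add_sqrt_log_div_le hn0 hδ0 hδ1.le
    _ = _ := by ring

end
end
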